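/- arXiv:2511.06931 — 13 statements merged into one kernel-verified Lean document; each statement's English description precedes it below -/
import Mathlib

section
/- If g : [0,∞) → ℝ is a C² solution of g'' + (1/r) g' - α² g - (1/2)(f² + g² - 1) g = 0 on (0,∞) with g'(0) = 0 and g(r) → 0 as r → ∞, where α ≥ 1/√2 and f : [0,∞) → ℝ is any function, then g ≡ 0. -/
/-!
Write `φ = r g'`. The equation says `φ' = r c g` with `c = α² + (f² + g² - 1)/2 ≥ g²/2`, so `φ`
is strictly increasing wherever `g > 0`. If `g` took a positive value, it would attain a positive
maximum at some `m ≥ 0` (it is continuous on `[0,∞)` and tends to `0`). Just to the right of `m`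
we have `φ > 0`: for `m > 0` because `φ(m) = 0`, and for `m = 0` because `φ ≤ K < 0` near `0`
would give `g(x) ≥ g(a) + K log(x/a) → ∞` as `x → 0⁺`. Hence `g` increases just after `m`,
contradicting maximality. The same argument applied to `-g` gives `g ≥ 0`.
-/

open Filter Set Topology

lemma strictMonoOn_of_hasDerivAt_pos {D : Set ℝ} (hD : Convex ℝ D) {f f' : ℝ → ℝ}
    (hf : ∀ x ∈ D, HasDerivAt f (f' x) x) (hf' : ∀ x ∈ D, 0 < f' x) : StrictMonoOn f D :=
  strictMonoOn_of_hasDerivWithinAt_pos hD (fun x hx => (hf x hx).continuousAt.continuousWithinAt)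
    (fun x hx => (hf x (interior_subset hx)).hasDerivWithinAt)
    (fun x hx => hf' x (interior_subset hx))

lemma tendsto_atTop_nhdsGT_zero_of_mul_deriv_le {g g' : ℝ → ℝ} {a K : ℝ} (ha : 0 < a)
    (hK : K < 0) (hg : ∀ x ∈ Ioc 0 a, HasDerivAt g (g' x) x)
    (hle : ∀ x ∈ Ioc 0 a, x * g' x ≤ K) :
    Tendsto g (𝓝[>] 0) atTop := by
  have hder : ∀ x ∈ Ioc 0 a,
      HasDerivAt (fun x => g x - K * Real.log x) (g' x - K * x⁻¹) x :=
    fun x hx => (hg x hx).sub ((Real.hasDerivAt_log hx.1.ne').const_mul K)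
  have hanti : AntitoneOn (fun x => g x - K * Real.log x) (Ioc 0 a) := by
    refine antitoneOn_of_hasDerivWithinAt_nonpos (convex_Ioc 0 a)
      (fun x hx => (hder x hx).continuousAt.continuousWithinAt)
      (fun x hx => (hder x (interior_subset hx)).hasDerivWithinAt) fun x hx => ?_
    have hx : x ∈ Ioc 0 a := interior_subset hx
    have : g' x ≤ K * x⁻¹ := by
      rw [← div_eq_mul_inv, le_div_iff₀ hx.1, mul_comm]
      exact hle x hx
    linarith
  have hlog : Tendsto (fun x => g a - K * Real.log a + K * Real.log x) (𝓝[>] 0) atTop :=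
    tendsto_atTop_add_const_left _ _ (Real.tendsto_log_nhdsGT_zero.const_mul_atBot_of_neg hK)
  refine tendsto_atTop_mono' _ ?_ hlog
  filter_upwards [Ioc_mem_nhdsGT ha] with x hx
  have := hanti hx ⟨ha, le_rfl⟩ hx.2
  linarith

lemma exists_isMaxOn_Ici_of_tendsto_zero {g : ℝ → ℝ} (hg : ContinuousOn g (Ici 0))
    (hlim : Tendsto g atTop (𝓝 0)) {a : ℝ} (ha : 0 ≤ a) (hga : 0 < g a) :
    ∃ m ∈ Ici (0:ℝ), IsMaxOn g (Ici 0) m := by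
  refine hg.exists_isMaxOn' isClosed_Ici ha ?_
  rw [cocompact_eq_atBot_atTop, inf_sup_right, eventually_sup, eventually_inf_principal,
    eventually_inf_principal]
  refine ⟨?_, (hlim.eventually (gt_mem_nhds hga)).mono fun x hx _ => hx.le⟩
  filter_upwards [eventually_lt_atBot 0] with x hx hx0
  exact absurd (mem_Ici.1 hx0) hx.not_ge

/-- `(r g')' = r Δg` for the Laplacian of a radial function on the plane. -/
theorem radial_maximum_principle {g g' φ' : ℝ → ℝ} (hgc : ContinuousOn g (Ici 0))
    (hg : ∀ r ∈ Ioi (0:ℝ), HasDerivAt g (g' r) r)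
    (hφ : ∀ r ∈ Ioi (0:ℝ), HasDerivAt (fun x => x * g' x) (φ' r) r)
    (hφ' : ∀ r ∈ Ioi (0:ℝ), 0 < g r → 0 < φ' r)
    (hlim : Tendsto g atTop (𝓝 0)) :
    ∀ r ∈ Ici (0:ℝ), g r ≤ 0 := by
  intro a ha
  by_contra! hga
  obtain ⟨m, hm : 0 ≤ m, hmax⟩ := exists_isMaxOn_Ici_of_tendsto_zero hgc hlim ha hga
  obtain ⟨u, hmu, hpos⟩ : ∃ u, m < u ∧ Icc m u ⊆ {x | 0 < g x} := by
    refine mem_nhdsGE_iff_exists_Icc_subset.1 ?_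
    exact ((hgc m hm).mono_left (nhdsWithin_mono _ (Ici_subset_Ici.2 hm))).eventually
      (lt_mem_nhds (hga.trans_le (hmax ha)))
  have hmono : StrictMonoOn (fun x => x * g' x) (Ioc m u) :=
    strictMonoOn_of_hasDerivAt_pos (convex_Ioc m u) (fun x hx => hφ x (hm.trans_lt hx.1))
      fun x hx => hφ' x (hm.trans_lt hx.1) (hpos (Ioc_subset_Icc_self hx))
  have hφ_nonneg : ∀ x ∈ Ioc m u, 0 ≤ x * g' x := by
    rcases hm.eq_or_lt with rfl | hm0
    · intro x hx
      by_contra! hneg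
      have hblow := tendsto_atTop_nhdsGT_zero_of_mul_deriv_le hx.1 hneg (fun y hy => hg y hy.1)
        fun y hy => hmono.monotoneOn ⟨hy.1, hy.2.trans hx.2⟩ hx hy.2
      exact not_tendsto_nhds_of_tendsto_atTop hblow _
        ((hgc 0 self_mem_Ici).mono Ioi_subset_Ici_self)
    · have hg'm : g' m = 0 :=
        (hmax.isLocalMax (Ici_mem_nhds hm0)).hasDerivAt_eq_zero (hg m hm0)
      have hmono' : StrictMonoOn (fun x => x * g' x) (Icc m u) :=
        strictMonoOn_of_hasDerivAt_pos (convex_Icc m u) (fun x hx => hφ x (hm0.trans_le hx.1))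
          fun x hx => hφ' x (hm0.trans_le hx.1) (hpos hx)
      intro x hx
      simpa [hg'm] using (hmono' (left_mem_Icc.2 hmu.le) (Ioc_subset_Icc_self hx) hx.1).le
  have hg'_pos : ∀ x ∈ Ioo m u, 0 < g' x := by
    intro x hx
    have hmid : (m + x) / 2 ∈ Ioc m u := ⟨by linarith [hx.1], by linarith [hx.2]⟩
    have hφx : 0 < x * g' x :=
      (hφ_nonneg _ hmid).trans_lt (hmono hmid ⟨hx.1, hx.2.le⟩ (by linarith [hx.1]))
    exact pos_of_mul_pos_right hφx (hm.trans hx.1.le)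
  have hgmono : StrictMonoOn g (Icc m u) := by
    refine strictMonoOn_of_hasDerivWithinAt_pos (f' := g') (convex_Icc m u)
      (hgc.mono fun x hx => hm.trans hx.1) (fun x hx => ?_) fun x hx => ?_
    all_goals rw [interior_Icc] at hx
    · exact (hg x (hm.trans_lt hx.1)).hasDerivWithinAt
    · exact hg'_pos x hx
  exact (hgmono (left_mem_Icc.2 hmu.le) (right_mem_Icc.2 hmu.le) hmu).not_ge
    (hmax (hm.trans hmu.le))

lemma hasDerivAt_mul_deriv {g : ℝ → ℝ} {s : Set ℝ} (hg : ContDiffOn ℝ 2 g s) (hs : IsOpen s)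
    {r : ℝ} (hr : r ∈ s) :
    HasDerivAt (fun x => x * deriv g x) (deriv g r + r * deriv (deriv g) r) r := by
  have hg' : ContDiffOn ℝ 1 (deriv g) s := hg.deriv_of_isOpen hs (by norm_num)
  simpa using (hasDerivAt_id' r).fun_mul
    ((hg'.differentiableOn one_ne_zero).differentiableAt (hs.mem_nhds hr)).hasDerivAt

theorem stmt0_general (α : ℝ) (hα : α ≥ 1 / Real.sqrt 2) (f g : ℝ → ℝ)
    (hgC : ContinuousOn g (Ici 0))
    (hg2 : ContDiffOn ℝ 2 g (Ioi 0))
    (hode : ∀ r ∈ Ioi (0:ℝ),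
      deriv (deriv g) r + (1 / r) * deriv g r - α ^ 2 * g r
        - (1 / 2) * ((f r) ^ 2 + (g r) ^ 2 - 1) * g r = 0)
    (hlim : Tendsto g atTop (nhds 0)) :
    ∀ r ∈ Ici (0:ℝ), g r = 0 := by
  have hα2 : 1 / 2 ≤ α ^ 2 :=
    calc (1:ℝ) / 2 = (1 / Real.sqrt 2) ^ 2 := by rw [div_pow, Real.sq_sqrt zero_le_two, one_pow]
      _ ≤ α ^ 2 := pow_le_pow_left₀ (by positivity) hα 2
  set c : ℝ → ℝ := fun r => α ^ 2 + (1 / 2) * ((f r) ^ 2 + (g r) ^ 2 - 1)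
  have hc : ∀ r, g r ≠ 0 → 0 < c r := fun r hr => by
    dsimp only [c]
    linarith [sq_nonneg (f r), pow_two_pos_of_ne_zero hr]
  have hg : ∀ r ∈ Ioi (0:ℝ), HasDerivAt g (deriv g r) r := fun r hr =>
    ((hg2.differentiableOn (by norm_num)).differentiableAt (isOpen_Ioi.mem_nhds hr)).hasDerivAt
  have hφ : ∀ r ∈ Ioi (0:ℝ), HasDerivAt (fun x => x * deriv g x) (r * (c r * g r)) r := by
    intro r hr
    convert hasDerivAt_mul_deriv hg2 isOpen_Ioi hr using 1
    have hr0 : r ≠ 0 := (mem_Ioi.1 hr).ne'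
    dsimp only [c]
    linear_combination (-r) * hode r hr + deriv g r * mul_inv_cancel₀ hr0
  have hle := radial_maximum_principle hgC hg hφ
    (fun r hr hgr => mul_pos hr (mul_pos (hc r hgr.ne') hgr)) hlim
  have hge := radial_maximum_principle (g := fun x => -g x) (g' := fun x => -deriv g x)
    hgC.neg (fun r hr => (hg r hr).neg)
    (fun r hr => by simpa only [mul_neg] using (hφ r hr).fun_neg)
    (fun r hr hgr => neg_pos.2 (mul_neg_of_pos_of_neg hr
      (mul_neg_of_pos_of_neg (hc r (neg_pos.1 hgr).ne) (neg_pos.1 hgr))))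
    (by simpa using hlim.neg)
  intro r hr
  linarith [hle r hr, hge r hr]

/-- If `g` is a C² solution of `g'' + (1/r) g' - α² g - (1/2)(f² + g² - 1) g = 0`
on `(0,∞)` with `g'(0) = 0` and `g(r) → 0` as `r → ∞`, where `α ≥ 1/√2`,
then `g ≡ 0` on `[0,∞)`. -/
theorem stmt0 (α : ℝ) (hα : α ≥ 1 / Real.sqrt 2) (f g : ℝ → ℝ)
    (hgC : ContinuousOn g (Ici 0))
    (hg2 : ContDiffOn ℝ 2 g (Ioi 0))
    (hode : ∀ r ∈ Ioi (0:ℝ),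
      deriv (deriv g) r + (1 / r) * deriv g r - α ^ 2 * g r
        - (1 / 2) * ((f r) ^ 2 + (g r) ^ 2 - 1) * g r = 0)
    (hg0 : deriv g 0 = 0)
    (hlim : Tendsto g atTop (nhds 0)) :
    ∀ r ∈ Ici (0:ℝ), g r = 0 :=
  stmt0_general α hα f g hgC hg2 hode hlim
end

section
/- Let f : [0,∞) → ℝ be continuous, increasing, with f(0) = 0, f(r) → 1 as r → ∞, and f(r) ≤ M₁ r for r ≤ 1. Suppose ã : [0,∞) → ℝ is C² on (0,∞), satisfies ã'' - (1/r) ã' + β² f² (1 - ã) = 0, and 0 < ã(r) < 1 with ã'(r) ≥ 0 for all r > 0. Then ã(r) → 1 as r → ∞. -/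
open Filter Set Topology

/-! If `ã` stayed below some `c < 1`, then for large `r` the equation
`(ã'/r)' = -β² f² (1 - ã) / r` together with `f → 1` gives `(ã'/r)' ≤ -ε / r` for some `ε > 0`,
so `ã'/r ≤ C - ε log r → -∞`, contradicting `ã' ≥ 0`. Since `ã` is increasing and `ã < 1`,
this forces `ã → 1`. -/

theorem tendsto_nhds_of_monotoneOn_Ioi {g : ℝ → ℝ} {x₀ L : ℝ} (hg : MonotoneOn g (Ioi x₀))
    (hle : ∀ r ∈ Ioi x₀, g r ≤ L) (hgt : ∀ c < L, ∃ r ∈ Ioi x₀, c < g r) :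
    Tendsto g atTop (𝓝 L) := by
  refine tendsto_order.2 ⟨fun c hc => ?_, fun c hc => ?_⟩
  · obtain ⟨r, hr, hcr⟩ := hgt c hc
    filter_upwards [eventually_ge_atTop r] with x hx
    exact hcr.trans_le (hg hr (lt_of_lt_of_le hr hx) hx)
  · filter_upwards [eventually_gt_atTop x₀] with x hx
    exact (hle x hx).trans_lt hc

theorem tendsto_atBot_of_hasDerivAt_le_neg_div {u u' : ℝ → ℝ} {ε R₀ : ℝ} (hε : 0 < ε)
    (hR₀ : 0 < R₀) (hu : ∀ r ∈ Ici R₀, HasDerivAt u (u' r) r)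
    (hu' : ∀ r ∈ Ici R₀, u' r ≤ -ε / r) : Tendsto u atTop atBot := by
  have hpos : ∀ r ∈ Ici R₀, 0 < r := fun r hr => hR₀.trans_le hr
  have hderiv : ∀ r ∈ Ici R₀, HasDerivAt (fun x => u x + ε * Real.log x) (u' r + ε * r⁻¹) r :=
    fun r hr => (hu r hr).add ((Real.hasDerivAt_log (hpos r hr).ne').const_mul ε)
  have hanti : AntitoneOn (fun x => u x + ε * Real.log x) (Ici R₀) := by
    refine antitoneOn_of_deriv_nonpos (convex_Ici R₀)
      (fun r hr => (hderiv r hr).continuousAt.continuousWithinAt)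
      (fun r hr => (hderiv r (interior_subset hr)).differentiableAt.differentiableWithinAt)
      (fun r hr => ?_)
    rw [(hderiv r (interior_subset hr)).deriv]
    linarith [hu' r (interior_subset hr), neg_div r ε, div_eq_mul_inv ε r]
  set C := u R₀ + ε * Real.log R₀
  have hbound : ∀ᶠ r in atTop, u r ≤ C + -(ε * Real.log r) := by
    filter_upwards [eventually_ge_atTop R₀] with r hr
    linarith [hanti self_mem_Ici hr hr]
  exact tendsto_atBot_mono' _ hbound <| tendsto_atBot_add_const_left _ C <|
    tendsto_neg_atTop_atBot.comp (Real.tendsto_log_atTop.const_mul_atTop hε)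

theorem hasDerivAt_deriv_div_self_of_ode {β : ℝ} {f a : ℝ → ℝ} (ha2 : ContDiffOn ℝ 2 a (Ioi 0))
    (hode : ∀ r ∈ Ioi (0:ℝ),
      deriv (deriv a) r - (1 / r) * deriv a r + β ^ 2 * (f r) ^ 2 * (1 - a r) = 0)
    {r : ℝ} (hr : 0 < r) :
    HasDerivAt (fun x => deriv a x / x) (-(β ^ 2 * f r ^ 2 * (1 - a r)) / r) r := by
  have ha' : ContDiffOn ℝ 1 (deriv a) (Ioi 0) := ha2.deriv_of_isOpen isOpen_Ioi (by norm_num)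
  have ha'' : HasDerivAt (deriv a) (deriv (deriv a) r) r :=
    ((ha'.differentiableOn one_ne_zero r hr).differentiableAt (isOpen_Ioi.mem_nhds hr)).hasDerivAt
  refine (ha''.div (hasDerivAt_id' r) hr.ne').congr_deriv ?_
  have := hode r hr
  field_simp at this ⊢
  linarith

theorem quarter_mul_one_sub_le_sq_mul_one_sub {β x y c : ℝ} (hx : 1 / 2 < x) (hyc : y ≤ c)
    (hc : c < 1) : β ^ 2 * (1 - c) / 4 ≤ β ^ 2 * x ^ 2 * (1 - y) := by
  have hx2 : 1 / 4 ≤ x ^ 2 := by nlinarith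
  calc β ^ 2 * (1 - c) / 4 = β ^ 2 * (1 / 4) * (1 - c) := by ring
    _ ≤ β ^ 2 * x ^ 2 * (1 - y) := by gcongr

theorem stmt2_general (β : ℝ) (hβ : β > 0) (f a : ℝ → ℝ)
    (hflim : Tendsto f atTop (nhds 1))
    (ha2 : ContDiffOn ℝ 2 a (Ioi 0))
    (hode : ∀ r ∈ Ioi (0:ℝ),
      deriv (deriv a) r - (1 / r) * deriv a r + β ^ 2 * (f r) ^ 2 * (1 - a r) = 0)
    (hbd : ∀ r ∈ Ioi (0:ℝ), 0 < a r ∧ a r < 1)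
    (hmono : ∀ r ∈ Ioi (0:ℝ), 0 ≤ deriv a r) :
    Tendsto a atTop (nhds 1) := by
  have ha_mono : MonotoneOn a (Ioi 0) :=
    monotoneOn_of_deriv_nonneg (convex_Ioi 0) ha2.continuousOn
      (by simpa using ha2.differentiableOn two_ne_zero) (by simpa using hmono)
  refine tendsto_nhds_of_monotoneOn_Ioi ha_mono (fun r hr => (hbd r hr).2.le) fun c hc => ?_
  by_contra! hac
  obtain ⟨R₀, hR₀⟩ := eventually_atTop.1 <|
    hflim.eventually (eventually_gt_nhds (by norm_num : (1:ℝ) / 2 < 1))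
  set R := max R₀ 1
  have hR : 0 < R := lt_max_of_lt_right one_pos
  have hε : 0 < β ^ 2 * (1 - c) / 4 := by
    have : 0 < 1 - c := by linarith
    positivity
  have hu' : ∀ r ∈ Ici R, -(β ^ 2 * f r ^ 2 * (1 - a r)) / r ≤ -(β ^ 2 * (1 - c) / 4) / r :=
    fun r hr => div_le_div_of_nonneg_right (neg_le_neg <| quarter_mul_one_sub_le_sq_mul_one_sub
      (hR₀ r ((le_max_left _ _).trans hr)) (hac r (hR.trans_le hr)) hc) (hR.trans_le hr).le
  have hu := tendsto_atBot_of_hasDerivAt_le_neg_div hε hR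
    (fun r hr => hasDerivAt_deriv_div_self_of_ode ha2 hode (hR.trans_le hr)) hu'
  obtain ⟨r, hneg, hr⟩ :=
    ((hu.eventually (eventually_lt_atBot 0)).and (eventually_gt_atTop 0)).exists
  exact hneg.not_ge (div_nonneg (hmono r hr) hr.le)

/-- If `f` is continuous, increasing, `f(0) = 0`, `f(r) → 1` at infinity,
`f(r) ≤ M₁ r` for `r ≤ 1`, and `ã` is a C² solution on `(0,∞)` of
`ã'' - (1/r) ã' + β² f² (1 - ã) = 0` with `0 < ã < 1` and `ã' ≥ 0` on `(0,∞)`,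
then `ã(r) → 1` as `r → ∞`. -/
theorem stmt2 (β M₁ : ℝ) (hβ : β > 0) (hM₁ : M₁ > 0) (f a : ℝ → ℝ)
    (hf : ContinuousOn f (Ici 0)) (hfmono : MonotoneOn f (Ici 0))
    (hf0 : f 0 = 0) (hflim : Tendsto f atTop (nhds 1))
    (hfbd : ∀ r ∈ Icc (0:ℝ) 1, f r ≤ M₁ * r)
    (ha2 : ContDiffOn ℝ 2 a (Ioi 0))
    (hode : ∀ r ∈ Ioi (0:ℝ),
      deriv (deriv a) r - (1 / r) * deriv a r + β ^ 2 * (f r) ^ 2 * (1 - a r) = 0)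
    (hbd : ∀ r ∈ Ioi (0:ℝ), 0 < a r ∧ a r < 1)
    (hmono : ∀ r ∈ Ioi (0:ℝ), 0 ≤ deriv a r) :
    Tendsto a atTop (nhds 1) :=
  stmt2_general β hβ f a hflim ha2 hode hbd hmono
end

section
/- Let f : [0,∞) → ℝ be continuous with f(r) → 1 as r → ∞, and let β > 0 and 0 < ε < 1. Suppose a : [0,∞) → ℝ is a positive C² solution on (0,∞) of a'' - (1/r) a' - β² f² a = 0 with a(r) → 0 as r → ∞. Then a(r) = O(r^{1/2} exp(-β(1-ε) r)) as r → ∞. -/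
open Filter Set Asymptotics

/-!
With `μ = β(1-ε) < β`, eventually `β² f² ≥ μ² + μ/r`, so the ODE makes `w = a' + μ a` a
supersolution of `w' = (μ + 1/r) w`. Along the integrating factor `e^{-μr}/r`, a positive value of
`w` can never be lost, and then `a' = w - μ a > 0` eventually, which is impossible for a positive
`a → 0`. Hence `w ≤ 0`, i.e. `e^{μr} a` is nonincreasing, and `a = O(e^{-μr})`.
-/

open Real

lemma ContDiffOn.hasDerivAt_deriv_and_deriv_deriv {a : ℝ → ℝ} {s : Set ℝ}
    (ha : ContDiffOn ℝ 2 a s) (hs : IsOpen s) {r : ℝ} (hr : r ∈ s) :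
    HasDerivAt a (deriv a r) r ∧ HasDerivAt (deriv a) (deriv (deriv a) r) r :=
  ⟨((ha.differentiableOn two_ne_zero).differentiableAt (hs.mem_nhds hr)).hasDerivAt,
    (((ha.deriv_of_isOpen hs (by norm_num)).differentiableOn one_ne_zero).differentiableAt
      (hs.mem_nhds hr)).hasDerivAt⟩

lemma eventually_sq_add_div_lt_mul_sq {f : ℝ → ℝ} {β μ : ℝ}
    (hf : Tendsto f atTop (nhds 1)) (hμβ : μ ^ 2 < β ^ 2) :
    ∀ᶠ r in atTop, μ ^ 2 + μ / r < β ^ 2 * f r ^ 2 := by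
  refine Tendsto.eventually_lt ?_ (by simpa using (hf.pow 2).const_mul (β ^ 2)) hμβ
  simpa using (tendsto_const_nhds (x := μ ^ 2)).add
    ((tendsto_const_nhds (x := μ)).div_atTop tendsto_id)

lemma monotoneOn_Ici_of_hasDerivAt_nonneg {f f' : ℝ → ℝ} {R : ℝ}
    (hf : ∀ r ∈ Ici R, HasDerivAt f (f' r) r) (hf' : ∀ r ∈ Ioi R, 0 ≤ f' r) :
    MonotoneOn f (Ici R) :=
  monotoneOn_of_hasDerivWithinAt_nonneg (convex_Ici R)
    (fun r hr => (hf r hr).continuousAt.continuousWithinAt)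
    (fun r hr => (hf r (interior_subset hr)).hasDerivWithinAt)
    (fun r hr => hf' r (by rwa [interior_Ici] at hr))

lemma antitoneOn_Ici_of_hasDerivAt_nonpos {f f' : ℝ → ℝ} {R : ℝ}
    (hf : ∀ r ∈ Ici R, HasDerivAt f (f' r) r) (hf' : ∀ r ∈ Ioi R, f' r ≤ 0) :
    AntitoneOn f (Ici R) :=
  antitoneOn_of_hasDerivWithinAt_nonpos (convex_Ici R)
    (fun r hr => (hf r hr).continuousAt.continuousWithinAt)
    (fun r hr => (hf r (interior_subset hr)).hasDerivWithinAt)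
    (fun r hr => hf' r (by rwa [interior_Ici] at hr))

section Supersolution

variable {w w' : ℝ → ℝ} {μ R : ℝ}

lemma monotoneOn_exp_mul_div_of_supersolution (hR : 0 < R)
    (hw : ∀ r ∈ Ici R, HasDerivAt w (w' r) r)
    (hsuper : ∀ r ∈ Ici R, (μ + 1 / r) * w r ≤ w' r) :
    MonotoneOn (fun r => exp (-(μ * r)) * w r / r) (Ici R) := by
  refine monotoneOn_Ici_of_hasDerivAt_nonneg (f' := fun r =>
    exp (-(μ * r)) / r * (w' r - (μ + 1 / r) * w r)) (fun r hr => ?_) (fun r hr => ?_)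
  · have hr0 : r ≠ 0 := (hR.trans_le hr).ne'
    have hexp : HasDerivAt (fun r => exp (-(μ * r))) (exp (-(μ * r)) * -μ) r := by
      simpa using ((hasDerivAt_id r).const_mul μ).neg.exp
    refine ((hexp.fun_mul (hw r hr)).fun_div (hasDerivAt_id r) hr0).congr_deriv ?_
    simp only [id]
    field_simp
    ring
  · have hr0 : 0 < r := hR.trans hr
    exact mul_nonneg (div_pos (exp_pos _) hr0).le (sub_nonneg.2 (hsuper r (Ioi_subset_Ici_self hr)))

lemma le_of_supersolution_of_nonneg (hμ : 0 ≤ μ) (hR : 0 < R)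
    (hw : ∀ r ∈ Ici R, HasDerivAt w (w' r) r)
    (hsuper : ∀ r ∈ Ici R, (μ + 1 / r) * w r ≤ w' r) (hwR : 0 ≤ w R)
    {r : ℝ} (hr : R ≤ r) : w R ≤ w r := by
  have hr0 : 0 < r := hR.trans_le hr
  have hF := monotoneOn_exp_mul_div_of_supersolution hR hw hsuper self_mem_Ici hr hr
  simp only at hF
  rw [div_le_div_iff₀ hR hr0] at hF
  have hexp : exp (-(μ * r)) ≤ exp (-(μ * R)) := exp_le_exp.2 (by nlinarith)
  -- `w r ≥ e^{μ(r-R)} (r/R) w R`, and both factors are at least `1`.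
  refine le_of_mul_le_mul_left ?_ (mul_pos (exp_pos (-(μ * r))) hR)
  calc exp (-(μ * r)) * R * w R ≤ exp (-(μ * R)) * w R * r := by
        rw [mul_assoc, mul_assoc]
        exact mul_le_mul hexp (by rw [mul_comm]; exact mul_le_mul_of_nonneg_left hr hwR)
          (by positivity) (exp_pos _).le
    _ ≤ exp (-(μ * r)) * w r * R := hF
    _ = exp (-(μ * r)) * R * w r := by ring

end Supersolution

lemma add_mul_nonpos_of_tendsto_zero {a a' a'' : ℝ → ℝ} {μ R : ℝ} (hμ : 0 ≤ μ)
    (hR : 0 < R) (ha : ∀ r ∈ Ici R, HasDerivAt a (a' r) r)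
    (ha' : ∀ r ∈ Ici R, HasDerivAt a' (a'' r) r)
    (hsuper : ∀ r ∈ Ici R, a' r / r + (μ ^ 2 + μ / r) * a r ≤ a'' r)
    (hpos : ∀ r ∈ Ici R, 0 < a r) (hlim : Tendsto a atTop (nhds 0)) :
    ∀ r ∈ Ici R, a' r + μ * a r ≤ 0 := by
  intro r₀ hr₀
  by_contra! hw₀
  have hR₀ : 0 < r₀ := hR.trans_le hr₀
  have hsub : Ici r₀ ⊆ Ici R := Ici_subset_Ici.2 hr₀
  have hw : ∀ r ∈ Ici r₀, HasDerivAt (fun r => a' r + μ * a r) (a'' r + μ * a' r) r :=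
    fun r hr => (ha' r (hsub hr)).add ((ha r (hsub hr)).const_mul μ)
  have hwsuper : ∀ r ∈ Ici r₀, (μ + 1 / r) * (a' r + μ * a r) ≤ a'' r + μ * a' r := by
    intro r hr
    have := hsuper r (hsub hr)
    calc (μ + 1 / r) * (a' r + μ * a r)
        = a' r / r + (μ ^ 2 + μ / r) * a r + μ * a' r := by ring
      _ ≤ a'' r + μ * a' r := by linarith
  have hwlow : ∀ r ∈ Ici r₀, a' r₀ + μ * a r₀ ≤ a' r + μ * a r := fun r hr =>
    le_of_supersolution_of_nonneg hμ hR₀ hw hwsuper hw₀.le hr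
  have hsmall : ∀ᶠ r in atTop, μ * a r < a' r₀ + μ * a r₀ := by
    simpa using (hlim.const_mul μ).eventually (eventually_lt_nhds (by rwa [mul_zero]))
  obtain ⟨r₁, hr₁⟩ := (hsmall.and (eventually_ge_atTop r₀)).exists_forall_of_atTop
  have hmono : MonotoneOn a (Ici r₁) :=
    monotoneOn_Ici_of_hasDerivAt_nonneg (fun r hr => ha r (hsub ((hr₁ r₁ le_rfl).2.trans hr)))
      fun r hr => by linarith [(hr₁ r hr.le).1, hwlow r (hr₁ r hr.le).2]
  have hnonpos : a r₁ ≤ 0 :=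
    ge_of_tendsto hlim ((eventually_ge_atTop r₁).mono fun r hr => hmono self_mem_Ici hr hr)
  exact (hpos r₁ (hsub (hr₁ r₁ le_rfl).2)).not_ge hnonpos

lemma isBigO_exp_of_add_mul_nonpos {a a' : ℝ → ℝ} {μ R : ℝ}
    (ha : ∀ r ∈ Ici R, HasDerivAt a (a' r) r) (hnonneg : ∀ r ∈ Ici R, 0 ≤ a r)
    (hw : ∀ r ∈ Ioi R, a' r + μ * a r ≤ 0) :
    a =O[atTop] fun r => exp (-(μ * r)) := by
  have hanti : AntitoneOn (fun r => exp (μ * r) * a r) (Ici R) := by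
    refine antitoneOn_Ici_of_hasDerivAt_nonpos (f' := fun r => exp (μ * r) * (a' r + μ * a r))
      (fun r hr => ?_) fun r hr => mul_nonpos_of_nonneg_of_nonpos (exp_pos _).le (hw r hr)
    have hexp : HasDerivAt (fun r => exp (μ * r)) (exp (μ * r) * μ) r := by
      simpa using ((hasDerivAt_id r).const_mul μ).exp
    exact (hexp.fun_mul (ha r hr)).congr_deriv (by ring)
  refine IsBigO.of_bound (exp (μ * R) * a R) ((eventually_ge_atTop R).mono fun r hr => ?_)
  have hbound : exp (μ * r) * a r ≤ exp (μ * R) * a R := hanti self_mem_Ici hr hr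
  rw [norm_of_nonneg (hnonneg r hr), norm_of_nonneg (exp_pos _).le]
  calc a r = exp (μ * r) * a r * exp (-(μ * r)) := by
        rw [mul_comm (exp _), mul_assoc, ← exp_add]; simp
    _ ≤ exp (μ * R) * a R * exp (-(μ * r)) := by gcongr

theorem stmt3_general (β ε : ℝ) (hβ : β > 0) (hε : ε ∈ Ioo (0:ℝ) 1) (f a : ℝ → ℝ)
    (hflim : Tendsto f atTop (nhds 1))
    (ha2 : ContDiffOn ℝ 2 a (Ioi 0))
    (hapos : ∀ r ∈ Ioi (0:ℝ), 0 < a r)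
    (hode : ∀ r ∈ Ioi (0:ℝ),
      deriv (deriv a) r - (1 / r) * deriv a r - β ^ 2 * (f r) ^ 2 * a r = 0)
    (hlim : Tendsto a atTop (nhds 0)) :
    a =O[atTop] fun r => Real.sqrt r * Real.exp (-β * (1 - ε) * r) := by
  obtain ⟨hε0, hε1⟩ := hε
  have hμβ : (β * (1 - ε)) ^ 2 < β ^ 2 :=
    pow_lt_pow_left₀ (by nlinarith) (by nlinarith) two_ne_zero
  set μ := β * (1 - ε)
  obtain ⟨R, hR⟩ := ((eventually_sq_add_div_lt_mul_sq hflim hμβ).and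
    (eventually_gt_atTop 0)).exists_forall_of_atTop
  have hR0 : ∀ r ∈ Ici R, r ∈ Ioi 0 := fun r hr => (hR r hr).2
  have hderiv := fun r hr => ha2.hasDerivAt_deriv_and_deriv_deriv isOpen_Ioi (hR0 r hr)
  have hpos : ∀ r ∈ Ici R, 0 < a r := fun r hr => hapos r (hR0 r hr)
  have hsuper : ∀ r ∈ Ici R, deriv a r / r + (μ ^ 2 + μ / r) * a r ≤ deriv (deriv a) r := by
    intro r hr
    have := hode r (hR0 r hr)
    rw [div_eq_mul_one_div, mul_comm]
    nlinarith [mul_le_mul_of_nonneg_right (hR r hr).1.le (hpos r hr).le]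
  have hw : ∀ r ∈ Ici R, deriv a r + μ * a r ≤ 0 :=
    add_mul_nonpos_of_tendsto_zero (mul_pos hβ (by linarith)).le (hR R le_rfl).2
      (fun r hr => (hderiv r hr).1) (fun r hr => (hderiv r hr).2) hsuper hpos hlim
  have hdecay := isBigO_exp_of_add_mul_nonpos (fun r hr => (hderiv r hr).1)
    (fun r hr => (hpos r hr).le) fun r hr => hw r (Ioi_subset_Ici_self hr)
  have hsqrt : (fun _ => (1:ℝ)) =O[atTop] Real.sqrt :=
    IsBigO.of_bound 1 ((eventually_ge_atTop 1).mono fun r hr => by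
      simpa [abs_of_nonneg (sqrt_nonneg r)] using Real.one_le_sqrt.2 hr)
  simpa [neg_mul] using hsqrt.mul hdecay

/-- Decay estimate for the gauge profile: if `f → 1` at infinity and `a > 0` is a
C² solution of `a'' - (1/r) a' - β² f² a = 0` on `(0,∞)` with `a → 0` at infinity,
then `a(r) = O(r^{1/2} exp(-β(1-ε) r))` as `r → ∞`. -/
theorem stmt3 (β ε : ℝ) (hβ : β > 0) (hε : ε ∈ Ioo (0:ℝ) 1) (f a : ℝ → ℝ)
    (hf : ContinuousOn f (Ici 0)) (hflim : Tendsto f atTop (nhds 1))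
    (ha2 : ContDiffOn ℝ 2 a (Ioi 0))
    (hapos : ∀ r ∈ Ioi (0:ℝ), 0 < a r)
    (hode : ∀ r ∈ Ioi (0:ℝ),
      deriv (deriv a) r - (1 / r) * deriv a r - β ^ 2 * (f r) ^ 2 * a r = 0)
    (hlim : Tendsto a atTop (nhds 0)) :
    a =O[atTop] fun r => Real.sqrt r * Real.exp (-β * (1 - ε) * r) :=
  stmt3_general β ε hβ hε f a hflim ha2 hapos hode hlim
end

section
/- Let α > 0, 0 < ε < 1, and let f : [0,∞) → ℝ be continuous with f(r) → 1 as r → ∞. Suppose g : [0,∞) → ℝ is a C² solution on (0,∞) of g'' + (1/r) g' - α² g - (1/2)(f² + g² - 1) g = 0 with 0 ≤ g(r) bounded and g(r) → 0 as r → ∞. Then g(r) = O(exp(-α(1-ε) r)) as r → ∞. -/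
/-!
Put `β = α(1-ε) < α`. Since `f → 1` and `g → 0`, the coefficient
`c = α² + (f² + g² - 1)/2` in `g'' + g'/r = c g` exceeds `β²` beyond some `r₀`. There the
comparison function `σ(r) = g(r₀) e^{-β(r-r₀)}` satisfies `σ'' + σ'/r ≤ β² σ`, so at a positive
interior maximum of `w = g - σ` one would have `w'' ≥ β² w > 0`. As `w(r₀) = 0` and `w → 0`,
the maximum principle gives `g ≤ σ` on `[r₀, ∞)`.
-/

open Filter Set Asymptotics Topology Real

theorem IsLocalMax.deriv_deriv_nonpos {f : ℝ → ℝ} {x : ℝ} (hmax : IsLocalMax f x)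
    (hc : ContinuousAt f x) : deriv (deriv f) x ≤ 0 := by
  by_contra! hpos
  have hmin : IsLocalMin f x := isLocalMin_of_deriv_deriv_pos hpos hmax.deriv_eq_zero hc
  have hconst : f =ᶠ[𝓝 x] fun _ => f x := by
    filter_upwards [hmin, hmax] with y hy₁ hy₂
    exact le_antisymm hy₂ hy₁
  have hderiv : deriv f =ᶠ[𝓝 x] fun _ => 0 :=
    hconst.eventuallyEq_nhds.mono fun y hy => by rw [hy.deriv_eq, deriv_const]
  rw [hderiv.deriv_eq, deriv_const] at hpos
  exact hpos.false

theorem nonpos_of_forall_isLocalMax_nonpos {w : ℝ → ℝ} {a : ℝ} (hw : ContinuousOn w (Ici a))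
    (ha : w a ≤ 0) (hlim : Tendsto w atTop (𝓝 0))
    (hmax : ∀ x, a < x → IsLocalMax w x → w x ≤ 0) : ∀ x, a ≤ x → w x ≤ 0 := by
  intro b hab
  by_contra! hb
  obtain ⟨R, hR⟩ := eventually_atTop.mp (hlim.eventually (gt_mem_nhds hb))
  set R' := max b R
  obtain ⟨x, hx, hxmax⟩ := isCompact_Icc.exists_isMaxOn
    (nonempty_Icc.mpr (hab.trans (le_max_left b R))) (hw.mono Icc_subset_Ici_self)
  have hbx : w b ≤ w x := hxmax ⟨hab, le_max_left _ _⟩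
  have hax : a < x := hx.1.lt_of_ne (by rintro rfl; linarith)
  have hxR : x < R' := hx.2.lt_of_ne (by rintro rfl; linarith [hR R' (le_max_right _ _)])
  exact (hmax x hax (hxmax.isLocalMax (Icc_mem_nhds hax hxR))).not_gt (hb.trans_le hbx)

theorem deriv_const_mul_exp_mul_sub (K b c : ℝ) :
    deriv (fun r => K * exp (b * (r - c))) = fun r => b * K * exp (b * (r - c)) := by
  funext r
  have h : HasDerivAt (fun r => b * (r - c)) b r := by
    simpa using ((hasDerivAt_id r).sub_const c).const_mul b
  rw [(h.exp.const_mul K).deriv]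
  ring

theorem le_mul_exp_of_radial_ode {g c : ℝ → ℝ} {β r₀ : ℝ} (hβ : 0 < β) (hr₀ : 0 < r₀)
    (hg : ContDiffOn ℝ 2 g (Ioi 0))
    (hode : ∀ r > r₀, deriv (deriv g) r + (1 / r) * deriv g r = c r * g r)
    (hc : ∀ r > r₀, β ^ 2 ≤ c r) (hg₀ : 0 ≤ g r₀) (hlim : Tendsto g atTop (𝓝 0)) :
    ∀ r ≥ r₀, g r ≤ g r₀ * exp (-β * (r - r₀)) := by
  set σ : ℝ → ℝ := fun r => g r₀ * exp (-β * (r - r₀)) with hσ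
  have hσ_contDiff : ContDiff ℝ 2 σ := by fun_prop
  have hσ' : ∀ r, deriv σ r = -β * σ r := fun r => by
    rw [hσ, deriv_const_mul_exp_mul_sub]; ring
  have hσ'' : ∀ r, deriv (deriv σ) r = β ^ 2 * σ r := fun r => by
    rw [hσ, deriv_const_mul_exp_mul_sub, deriv_const_mul_exp_mul_sub]; ring
  have hσ_tendsto : Tendsto σ atTop (𝓝 0) := by
    have hexp := tendsto_exp_atBot.comp <|
      (tendsto_atTop_add_const_right _ (-r₀) tendsto_id).const_mul_atTop_of_neg (neg_lt_zero.mpr hβ)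
    simpa [hσ, sub_eq_add_neg] using hexp.const_mul (g r₀)
  have hg_at : ∀ {x}, 0 < x → ContDiffAt ℝ 2 g x := fun hx =>
    hg.contDiffAt (isOpen_Ioi.mem_nhds hx)
  suffices hw : ∀ r ≥ r₀, g r - σ r ≤ 0 from fun r hr => by linarith [hw r hr]
  refine nonpos_of_forall_isLocalMax_nonpos ?_ (by simp [hσ]) (by simpa using hlim.sub hσ_tendsto)
    fun x hx hmax => ?_
  · exact (hg.continuousOn.mono fun r (hr : r₀ ≤ r) => hr₀.trans_le hr).sub
      hσ_contDiff.continuous.continuousOn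
  by_contra! hwx
  have hx₀ : 0 < x := hr₀.trans hx
  have hσx : 0 ≤ σ x := by positivity
  have hslope : deriv g x = -β * σ x := by
    have h := hmax.deriv_eq_zero
    rw [deriv_fun_sub ((hg_at hx₀).differentiableAt two_ne_zero)
      (hσ_contDiff.differentiable two_ne_zero x), hσ'] at h
    linarith
  have hsecond : deriv (deriv fun r => g r - σ r) x = deriv (deriv g) x - β ^ 2 * σ x := by
    have h := iteratedDeriv_fun_sub (n := 2) (hg_at hx₀) hσ_contDiff.contDiffAt
    simpa only [iteratedDeriv_eq_iterate, Function.iterate_succ, Function.iterate_zero,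
      Function.comp_apply, id, hσ''] using h
  -- the friction term `-g'/x = βσ/x` has the favourable sign
  have hfriction : 0 ≤ 1 / x * (β * σ x) := by positivity
  have hcoef : β ^ 2 * g x ≤ c x * g x := mul_le_mul_of_nonneg_right (hc x hx) (by linarith)
  have hconvex : 0 < deriv (deriv fun r => g r - σ r) x := by
    have hode_x := hode x hx
    rw [hslope] at hode_x
    rw [hsecond]
    linarith [mul_pos (pow_pos hβ 2) hwx]
  exact hconvex.not_ge (hmax.deriv_deriv_nonpos
    (((hg_at hx₀).continuousAt).sub hσ_contDiff.continuous.continuousAt))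

theorem stmt4_general (α ε : ℝ) (hα : α > 0) (hε : ε ∈ Ioo (0:ℝ) 1) (f g : ℝ → ℝ)
    (hflim : Tendsto f atTop (nhds 1))
    (hg2 : ContDiffOn ℝ 2 g (Ioi 0))
    (hode : ∀ r ∈ Ioi (0:ℝ),
      deriv (deriv g) r + (1 / r) * deriv g r - α ^ 2 * g r
        - (1 / 2) * ((f r) ^ 2 + (g r) ^ 2 - 1) * g r = 0)
    (hgnn : ∀ r ∈ Ici (0:ℝ), 0 ≤ g r)
    (hlim : Tendsto g atTop (nhds 0)) :
    g =O[atTop] fun r => Real.exp (-α * (1 - ε) * r) := by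
  set β := α * (1 - ε)
  have hβ : 0 < β := mul_pos hα (by linarith [hε.2])
  have hβα : β ^ 2 < α ^ 2 := pow_lt_pow_left₀ (by nlinarith [hε.1]) hβ.le two_ne_zero
  set c : ℝ → ℝ := fun r => α ^ 2 + (1 / 2) * ((f r) ^ 2 + (g r) ^ 2 - 1)
  have hc_tendsto : Tendsto c atTop (𝓝 (α ^ 2)) := by
    simpa [c] using (((hflim.pow 2).add (hlim.pow 2)).sub_const 1).const_mul (1 / 2 : ℝ)
      |>.const_add (α ^ 2)
  obtain ⟨a, ha⟩ := eventually_atTop.mp (hc_tendsto.eventually (lt_mem_nhds hβα))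
  set r₀ := max a 1
  have hr₀ : 0 < r₀ := zero_lt_one.trans_le (le_max_right a 1)
  have hbound := le_mul_exp_of_radial_ode hβ hr₀ hg2
    (fun r hr => by simp only [c]; linarith [hode r (hr₀.trans hr)])
    (fun r hr => (ha r ((le_max_left a 1).trans hr.le)).le) (hgnn r₀ hr₀.le) hlim
  refine IsBigO.of_bound (g r₀ * exp (β * r₀)) ?_
  filter_upwards [eventually_ge_atTop r₀] with r hr
  rw [norm_of_nonneg (hgnn r (hr₀.le.trans hr)), norm_of_nonneg (exp_pos _).le, mul_assoc,
    ← exp_add]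
  convert hbound r hr using 3
  ring

/-- Exponential decay for the neutral scalar profile: if `f → 1` at infinity and
`g ≥ 0` is a bounded C² solution on `(0,∞)` of
`g'' + (1/r) g' - α² g - (1/2)(f² + g² - 1) g = 0` with `g → 0` at infinity, then
`g(r) = O(exp(-α(1-ε) r))` as `r → ∞`. -/
theorem stmt4 (α ε : ℝ) (hα : α > 0) (hε : ε ∈ Ioo (0:ℝ) 1) (f g : ℝ → ℝ)
    (hf : ContinuousOn f (Ici 0)) (hflim : Tendsto f atTop (nhds 1))
    (hg2 : ContDiffOn ℝ 2 g (Ioi 0))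
    (hode : ∀ r ∈ Ioi (0:ℝ),
      deriv (deriv g) r + (1 / r) * deriv g r - α ^ 2 * g r
        - (1 / 2) * ((f r) ^ 2 + (g r) ^ 2 - 1) * g r = 0)
    (hgnn : ∀ r ∈ Ici (0:ℝ), 0 ≤ g r)
    (hgbd : ∃ C : ℝ, ∀ r ∈ Ici (0:ℝ), g r ≤ C)
    (hlim : Tendsto g atTop (nhds 0)) :
    g =O[atTop] fun r => Real.exp (-α * (1 - ε) * r) :=
  stmt4_general α ε hα hε f g hflim hg2 hode hgnn hlim
end

section
/- Let a, g : [0,∞) → ℝ be continuous with 0 < a(r) < 1 for r > 0 and g bounded. Suppose f₁, f₂ : [0,∞) → ℝ are two positive C² solutions on (0,∞) of f'' + (1/r) f' - (a²/r²) f - (1/2)(f² + g² - 1) f = 0 with f_i(0) = 0, f_i(∞) = 1, f_i(r) = O(r) near 0, and 1 - f_i decaying exponentially at infinity. Then f₁ = f₂ on (0,∞). -/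
open Filter Set Topology

/-!
For solutions of `f'' + f'/r = (P + f²/2) f` the radial Wronskian `W = r (f₁' f₂ - f₁ f₂')`
satisfies `W' = r f₁ f₂ (f₁² - f₂²) / 2`, so `W` increases strictly wherever `f₁ > f₂`.
Suppose `f₁ r₀ > f₂ r₀`. If `W r₀ > 0`, follow the region `f₁ > f₂` to the right: it cannot end at
a touching point, where `W ≤ 0`, and it cannot be unbounded, since then
`(f₁/f₂)' = W / (r f₂²) ≳ 1/r` would force `f₁/f₂ → ∞` against `f₁, f₂ → 1`. If `W r₀ ≤ 0`,
follow it to the left: a touching point has `W ≥ 0`, and reaching `0` would give `W ≤ -μ < 0`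
near `0`, so that `(f₂/f₁)' = -W / (r f₁²) ≥ μ / (C² r³)` by `f₁ ≤ C r`, forcing `f₂/f₁ → -∞`.
Hence `f₁ ≤ f₂`, and `f₁ = f₂` by symmetry.
-/

theorem HasDerivAt.nonneg_of_eq_zero_of_nonneg_on_Ioo {f : ℝ → ℝ} {f' x b : ℝ}
    (hf : HasDerivAt f f' x) (hxb : x < b) (hx : f x = 0) (hnonneg : ∀ y ∈ Ioo x b, 0 ≤ f y) :
    0 ≤ f' := by
  refine ge_of_tendsto (hasDerivAt_iff_tendsto_slope.1 hf |>.mono_left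
    (nhdsWithin_mono x fun y (hy : y ∈ Ioi x) => hy.ne')) ?_
  filter_upwards [Ioo_mem_nhdsGT hxb] with y hy
  rw [slope_def_field, hx, sub_zero]
  exact div_nonneg (hnonneg y hy) (sub_nonneg.2 hy.1.le)

theorem HasDerivAt.nonpos_of_eq_zero_of_nonneg_on_Ioo {f : ℝ → ℝ} {f' a x : ℝ}
    (hf : HasDerivAt f f' x) (hax : a < x) (hx : f x = 0) (hnonneg : ∀ y ∈ Ioo a x, 0 ≤ f y) :
    f' ≤ 0 := by
  refine le_of_tendsto (hasDerivAt_iff_tendsto_slope.1 hf |>.mono_left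
    (nhdsWithin_mono x fun y (hy : y ∈ Iio x) => hy.ne)) ?_
  filter_upwards [Ioo_mem_nhdsLT hax] with y hy
  rw [slope_def_field, hx, sub_zero]
  exact div_nonpos_of_nonneg_of_nonpos (hnonneg y hy) (sub_nonpos.2 hy.2.le)

theorem forall_pos_or_exists_first_zero {d : ℝ → ℝ} {a : ℝ} (hd : ContinuousOn d (Ici a))
    (ha : 0 < d a) : (∀ x ∈ Ici a, 0 < d x) ∨ ∃ b ∈ Ioi a, d b = 0 ∧ ∀ x ∈ Ico a b, 0 < d x := by
  refine or_iff_not_imp_left.2 fun hneg => ?_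
  push Not at hneg
  obtain ⟨t, hat, hdt⟩ := hneg
  have hcont : ContinuousOn d (Icc a t) := hd.mono Icc_subset_Ici_self
  have hZ : IsCompact {x ∈ Icc a t | d x ≤ 0} :=
    isCompact_Icc.of_isClosed_subset
      (hcont.preimage_isClosed_of_isClosed isClosed_Icc isClosed_Iic) fun _ hx => hx.1
  obtain ⟨b, ⟨hb, hdb⟩, hleast⟩ := hZ.exists_isLeast ⟨t, ⟨⟨hat, le_rfl⟩, hdt⟩⟩
  have hpos : ∀ x ∈ Ico a b, 0 < d x := fun x hx => by
    by_contra! hdx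
    exact (hleast ⟨⟨hx.1, hx.2.le.trans hb.2⟩, hdx⟩).not_gt hx.2
  have hab : a < b := lt_of_le_of_ne hb.1 fun h => (h ▸ hdb).not_gt ha
  obtain ⟨c, hc, hdc⟩ := intermediate_value_Icc' hb.1 (hcont.mono (Icc_subset_Icc_right hb.2))
    ⟨hdb, ha.le⟩
  have hcb : c = b := le_antisymm hc.2 (hleast ⟨⟨hc.1, hc.2.trans hb.2⟩, hdc.le⟩)
  exact ⟨b, hab, hcb ▸ hdc, hpos⟩

theorem forall_pos_or_exists_last_zero {d : ℝ → ℝ} {a b : ℝ} (hd : ContinuousOn d (Ioc a b))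
    (hb : 0 < d b) :
    (∀ x ∈ Ioc a b, 0 < d x) ∨ ∃ c ∈ Ioo a b, d c = 0 ∧ ∀ x ∈ Ioc c b, 0 < d x := by
  refine or_iff_not_imp_left.2 fun hneg => ?_
  push Not at hneg
  obtain ⟨t, htb, hdt⟩ := hneg
  have hcont : ContinuousOn d (Icc t b) := hd.mono (Icc_subset_Ioc_iff htb.2 |>.2 ⟨htb.1, le_rfl⟩)
  have hZ : IsCompact {x ∈ Icc t b | d x ≤ 0} :=
    isCompact_Icc.of_isClosed_subset
      (hcont.preimage_isClosed_of_isClosed isClosed_Icc isClosed_Iic) fun _ hx => hx.1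
  obtain ⟨c, ⟨hc, hdc⟩, hgreatest⟩ := hZ.exists_isGreatest ⟨t, ⟨⟨le_rfl, htb.2⟩, hdt⟩⟩
  have hpos : ∀ x ∈ Ioc c b, 0 < d x := fun x hx => by
    by_contra! hdx
    exact (hgreatest ⟨⟨hc.1.trans hx.1.le, hx.2⟩, hdx⟩).not_gt hx.1
  have hcb : c < b := lt_of_le_of_ne hc.2 fun h => (h ▸ hdc).not_gt hb
  obtain ⟨e, he, hde⟩ := intermediate_value_Icc hc.2 (hcont.mono (Icc_subset_Icc_left hc.1))
    ⟨hdc, hb.le⟩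
  have hec : e = c := le_antisymm (hgreatest ⟨⟨hc.1.trans he.1, he.2⟩, hde.le⟩) he.1
  exact ⟨c, ⟨htb.1.trans_le hc.1, hcb⟩, hec ▸ hde, hpos⟩

theorem monotoneOn_sub_mul_log {q q' : ℝ → ℝ} {I : Set ℝ} {c : ℝ} (hI : Convex ℝ I)
    (hI0 : I ⊆ Ioi 0) (hq : ∀ r ∈ I, HasDerivAt q (q' r) r) (hle : ∀ r ∈ I, c / r ≤ q' r) :
    MonotoneOn (fun r => q r - c * Real.log r) I := by
  have hderiv : ∀ r ∈ I, HasDerivAt (fun r => q r - c * Real.log r) (q' r - c * r⁻¹) r :=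
    fun r hr => (hq r hr).sub ((Real.hasDerivAt_log (hI0 hr).ne').const_mul c)
  refine monotoneOn_of_deriv_nonneg hI (fun r hr => (hderiv r hr).continuousAt.continuousWithinAt)
    (fun r hr => (hderiv r (interior_subset hr)).differentiableAt.differentiableWithinAt)
    fun r hr => ?_
  rw [(hderiv r (interior_subset hr)).deriv, ← div_eq_mul_inv]
  exact sub_nonneg.2 (hle r (interior_subset hr))

theorem tendsto_atTop_of_div_le_deriv {q q' : ℝ → ℝ} {c R : ℝ} (hc : 0 < c) (hR : 0 < R)
    (hq : ∀ r ∈ Ici R, HasDerivAt q (q' r) r) (hle : ∀ r ∈ Ici R, c / r ≤ q' r) :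
    Tendsto q atTop atTop := by
  have hmono := monotoneOn_sub_mul_log (convex_Ici R) (Ici_subset_Ioi.2 hR) hq hle
  refine tendsto_atTop_mono' _ ?_
    (tendsto_atTop_add_const_left _ (q R - c * Real.log R)
      (Real.tendsto_log_atTop.const_mul_atTop hc))
  filter_upwards [eventually_ge_atTop R] with r hr
  have := hmono self_mem_Ici hr hr
  simp only at this
  linarith

theorem tendsto_nhdsGT_zero_atBot_of_div_le_deriv {p p' : ℝ → ℝ} {c δ : ℝ} (hc : 0 < c)
    (hδ : 0 < δ) (hp : ∀ r ∈ Ioc 0 δ, HasDerivAt p (p' r) r) (hle : ∀ r ∈ Ioc 0 δ, c / r ≤ p' r) :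
    Tendsto p (𝓝[>] 0) atBot := by
  have hmono := monotoneOn_sub_mul_log (convex_Ioc 0 δ) Ioc_subset_Ioi_self hp hle
  refine tendsto_atBot_mono' _ ?_
    (tendsto_atBot_add_const_left _ (p δ - c * Real.log δ)
      (Real.tendsto_log_nhdsGT_zero.const_mul_atBot hc))
  filter_upwards [Ioo_mem_nhdsGT hδ] with r hr
  have := hmono ⟨hr.1, hr.2.le⟩ (right_mem_Ioc.2 hδ) hr.2.le
  simp only at this
  linarith

noncomputable def radialWronskian (f₁ f₂ : ℝ → ℝ) (r : ℝ) : ℝ :=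
  r * (deriv f₁ r * f₂ r - f₁ r * deriv f₂ r)

theorem radialWronskian_swap (f₁ f₂ : ℝ → ℝ) :
    radialWronskian f₂ f₁ = -radialWronskian f₁ f₂ := by
  ext r
  simp only [radialWronskian, Pi.neg_apply]
  ring

theorem radialWronskian_eq_of_eq {f₁ f₂ : ℝ → ℝ} {x : ℝ} (heq : f₁ x = f₂ x) :
    radialWronskian f₁ f₂ x = x * f₁ x * (deriv f₁ x - deriv f₂ x) := by
  rw [radialWronskian, heq]
  ring

/-- The Higgs profile equation is the case `P r = a(r)²/r² + (g(r)² - 1)/2`. -/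
structure IsPositiveProfileSolution (P f : ℝ → ℝ) : Prop where
  contDiffOn : ContDiffOn ℝ 2 f (Ioi 0)
  pos : ∀ r ∈ Ioi (0 : ℝ), 0 < f r
  ode : ∀ r ∈ Ioi (0 : ℝ), deriv (deriv f) r + deriv f r / r = (P r + f r ^ 2 / 2) * f r

namespace IsPositiveProfileSolution

variable {P f f₁ f₂ : ℝ → ℝ} {r : ℝ}

theorem hasDerivAt (hf : IsPositiveProfileSolution P f) (hr : r ∈ Ioi 0) :
    HasDerivAt f (deriv f r) r :=
  ((hf.contDiffOn.differentiableOn (by norm_num)).differentiableAt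
    (isOpen_Ioi.mem_nhds hr)).hasDerivAt

theorem hasDerivAt_deriv (hf : IsPositiveProfileSolution P f) (hr : r ∈ Ioi 0) :
    HasDerivAt (deriv f) (deriv (deriv f) r) r :=
  (((hf.contDiffOn.deriv_of_isOpen (m := 1) isOpen_Ioi (by norm_num)).differentiableOn
    (by norm_num)).differentiableAt (isOpen_Ioi.mem_nhds hr)).hasDerivAt

theorem hasDerivAt_radialWronskian (h₁ : IsPositiveProfileSolution P f₁)
    (h₂ : IsPositiveProfileSolution P f₂) (hr : r ∈ Ioi 0) :
    HasDerivAt (radialWronskian f₁ f₂) (r * (f₁ r ^ 2 - f₂ r ^ 2) / 2 * (f₁ r * f₂ r)) r := by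
  have e₁ := h₁.ode r hr
  have e₂ := h₂.ode r hr
  have hr0 : r ≠ 0 := (mem_Ioi.1 hr).ne'
  refine ((hasDerivAt_id' r).mul (((h₁.hasDerivAt_deriv hr).mul (h₂.hasDerivAt hr)).sub
    ((h₁.hasDerivAt hr).mul (h₂.hasDerivAt_deriv hr)))).congr_deriv ?_
  field_simp at e₁ e₂
  simp only [Pi.sub_apply, Pi.mul_apply]
  linear_combination (f₂ r * e₁ - f₁ r * e₂) / 2

theorem hasDerivAt_div (h₁ : IsPositiveProfileSolution P f₁)
    (h₂ : IsPositiveProfileSolution P f₂) (hr : r ∈ Ioi 0) :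
    HasDerivAt (fun r => f₁ r / f₂ r) (radialWronskian f₁ f₂ r / (r * f₂ r ^ 2)) r := by
  refine ((h₁.hasDerivAt hr).div (h₂.hasDerivAt hr) (h₂.pos r hr).ne').congr_deriv ?_
  rw [radialWronskian, mul_div_mul_left _ _ (mem_Ioi.1 hr).ne']

theorem strictMonoOn_radialWronskian (h₁ : IsPositiveProfileSolution P f₁)
    (h₂ : IsPositiveProfileSolution P f₂) {J : Set ℝ} (hJ : Convex ℝ J) (hJ0 : J ⊆ Ioi 0)
    (hlt : ∀ x ∈ interior J, f₂ x < f₁ x) : StrictMonoOn (radialWronskian f₁ f₂) J := by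
  refine strictMonoOn_of_deriv_pos hJ
    (fun r hr => (h₁.hasDerivAt_radialWronskian h₂ (hJ0 hr)).continuousAt.continuousWithinAt)
    fun r hr => ?_
  have hr0 : r ∈ Ioi 0 := hJ0 (interior_subset hr)
  have hf₂ := h₂.pos r hr0
  have hsq : f₂ r ^ 2 < f₁ r ^ 2 := pow_lt_pow_left₀ (hlt r hr) hf₂.le two_ne_zero
  rw [(h₁.hasDerivAt_radialWronskian h₂ hr0).deriv]
  exact mul_pos (half_pos (mul_pos hr0 (sub_pos.2 hsq))) (mul_pos (h₁.pos r hr0) hf₂)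

theorem radialWronskian_nonneg_of_eq (h₁ : IsPositiveProfileSolution P f₁)
    (h₂ : IsPositiveProfileSolution P f₂) {α b : ℝ} (hα : 0 < α) (hαb : α < b)
    (heq : f₁ α = f₂ α) (hlt : ∀ x ∈ Ioo α b, f₂ x < f₁ x) : 0 ≤ radialWronskian f₁ f₂ α := by
  have hd : 0 ≤ deriv f₁ α - deriv f₂ α :=
    ((h₁.hasDerivAt hα).sub (h₂.hasDerivAt hα)).nonneg_of_eq_zero_of_nonneg_on_Ioo hαb
      (sub_eq_zero.2 heq) fun x hx => (sub_pos.2 (hlt x hx)).le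
  rw [radialWronskian_eq_of_eq heq]
  exact mul_nonneg (mul_nonneg hα.le (h₁.pos α hα).le) hd

theorem radialWronskian_nonpos_of_eq (h₁ : IsPositiveProfileSolution P f₁)
    (h₂ : IsPositiveProfileSolution P f₂) {a β : ℝ} (hβ : 0 < β) (haβ : a < β)
    (heq : f₁ β = f₂ β) (hlt : ∀ x ∈ Ioo a β, f₂ x < f₁ x) : radialWronskian f₁ f₂ β ≤ 0 := by
  have hd : deriv f₁ β - deriv f₂ β ≤ 0 :=
    ((h₁.hasDerivAt hβ).sub (h₂.hasDerivAt hβ)).nonpos_of_eq_zero_of_nonneg_on_Ioo haβ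
      (sub_eq_zero.2 heq) fun x hx => (sub_pos.2 (hlt x hx)).le
  rw [radialWronskian_eq_of_eq heq]
  exact mul_nonpos_of_nonneg_of_nonpos (mul_nonneg hβ.le (h₁.pos β hβ).le) hd

theorem continuousOn_sub (h₁ : IsPositiveProfileSolution P f₁)
    (h₂ : IsPositiveProfileSolution P f₂) {s : Set ℝ} (hs : s ⊆ Ioi 0) :
    ContinuousOn (fun x => f₁ x - f₂ x) s := fun _ hx =>
  ((h₁.hasDerivAt (hs hx)).continuousAt.sub (h₂.hasDerivAt (hs hx)).continuousAt).continuousWithinAt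

theorem radialWronskian_nonpos_of_forall_lt (h₁ : IsPositiveProfileSolution P f₁)
    (h₂ : IsPositiveProfileSolution P f₂) (hlim₁ : Tendsto f₁ atTop (𝓝 1))
    (hlim₂ : Tendsto f₂ atTop (𝓝 1)) {r₀ : ℝ} (hr₀ : 0 < r₀) (hlt : ∀ x ∈ Ici r₀, f₂ x < f₁ x) :
    radialWronskian f₁ f₂ r₀ ≤ 0 := by
  by_contra! hW
  have hmono := h₁.strictMonoOn_radialWronskian h₂ (convex_Ici r₀) (Ici_subset_Ioi.2 hr₀)
    fun x hx => hlt x (interior_subset hx)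
  obtain ⟨R, hR⟩ := eventually_atTop.1 (hlim₂.eventually (eventually_le_nhds one_lt_two))
  have hratio : Tendsto (fun r => f₁ r / f₂ r) atTop atTop := by
    refine tendsto_atTop_of_div_le_deriv (c := radialWronskian f₁ f₂ r₀ / 4) (R := max r₀ R)
      (by positivity) (lt_max_of_lt_left hr₀)
      (fun r hr => h₁.hasDerivAt_div h₂ (hr₀.trans_le ((le_max_left _ _).trans hr)))
      fun r hr => ?_
    have hr₀r : r₀ ≤ r := (le_max_left _ _).trans hr
    have hr0 : 0 < r := hr₀.trans_le hr₀r
    have hWr : radialWronskian f₁ f₂ r₀ ≤ radialWronskian f₁ f₂ r :=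
      hmono.monotoneOn self_mem_Ici hr₀r hr₀r
    have hf₂ := h₂.pos r hr0
    have hf₂sq : f₂ r ^ 2 ≤ 4 := by nlinarith [hR r ((le_max_right _ _).trans hr)]
    calc radialWronskian f₁ f₂ r₀ / 4 / r
        ≤ radialWronskian f₁ f₂ r / f₂ r ^ 2 / r := by
          gcongr
          exact hW.le.trans hWr
      _ = radialWronskian f₁ f₂ r / (r * f₂ r ^ 2) := by ring
  have hratio_one := hlim₁.div hlim₂ one_ne_zero
  rw [div_one] at hratio_one
  exact not_tendsto_nhds_of_tendsto_atTop hratio 1 hratio_one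

theorem radialWronskian_pos_of_forall_lt (h₁ : IsPositiveProfileSolution P f₁)
    (h₂ : IsPositiveProfileSolution P f₂) (hO₁ : ∃ C > (0 : ℝ), ∀ r ∈ Ioc (0 : ℝ) 1, f₁ r ≤ C * r)
    {r₀ : ℝ} (hr₀ : 0 < r₀) (hlt : ∀ x ∈ Ioc 0 r₀, f₂ x < f₁ x) :
    0 < radialWronskian f₁ f₂ r₀ := by
  by_contra! hW
  obtain ⟨C, hC, hO⟩ := hO₁
  have hmono := h₁.strictMonoOn_radialWronskian h₂ (convex_Ioc 0 r₀) Ioc_subset_Ioi_self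
    fun x hx => hlt x (interior_subset hx)
  set δ := min (r₀ / 2) 1
  have hδ : 0 < δ := lt_min (half_pos hr₀) one_pos
  have hδr₀ : δ < r₀ := (min_le_left _ _).trans_lt (half_lt_self hr₀)
  have hWδ : radialWronskian f₁ f₂ δ < 0 :=
    (hmono ⟨hδ, hδr₀.le⟩ (right_mem_Ioc.2 hr₀) hδr₀).trans_le hW
  have hratio : Tendsto (fun r => f₂ r / f₁ r) (𝓝[>] 0) atBot := by
    refine tendsto_nhdsGT_zero_atBot_of_div_le_deriv (c := -radialWronskian f₁ f₂ δ / C ^ 2)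
      (by have := neg_pos.2 hWδ; positivity) hδ (fun r hr => h₂.hasDerivAt_div h₁ hr.1)
      fun r hr => ?_
    have hWr : radialWronskian f₁ f₂ r ≤ radialWronskian f₁ f₂ δ :=
      hmono.monotoneOn ⟨hr.1, hr.2.trans hδr₀.le⟩ ⟨hδ, hδr₀.le⟩ hr.2
    have hr0 : 0 < r := hr.1
    have hr1 : r ≤ 1 := hr.2.trans (min_le_right _ _)
    have hf₁ := h₁.pos r hr0
    have hf₁sq : f₁ r ^ 2 ≤ C ^ 2 :=
      pow_le_pow_left₀ hf₁.le ((hO r ⟨hr0, hr1⟩).trans (mul_le_of_le_one_right hC.le hr1)) 2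
    rw [radialWronskian_swap f₁ f₂, Pi.neg_apply]
    calc -radialWronskian f₁ f₂ δ / C ^ 2 / r
        ≤ -radialWronskian f₁ f₂ r / f₁ r ^ 2 / r := by
          gcongr
          linarith
      _ = -radialWronskian f₁ f₂ r / (r * f₁ r ^ 2) := by ring
  obtain ⟨r, hneg, hr⟩ :=
    ((hratio.eventually (eventually_lt_atBot 0)).and self_mem_nhdsWithin).exists
  exact hneg.not_ge (div_pos (h₂.pos r hr) (h₁.pos r hr)).le

theorem radialWronskian_nonpos_of_lt (h₁ : IsPositiveProfileSolution P f₁)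
    (h₂ : IsPositiveProfileSolution P f₂) (hlim₁ : Tendsto f₁ atTop (𝓝 1))
    (hlim₂ : Tendsto f₂ atTop (𝓝 1)) {r₀ : ℝ} (hr₀ : 0 < r₀) (hlt : f₂ r₀ < f₁ r₀) :
    radialWronskian f₁ f₂ r₀ ≤ 0 := by
  rcases forall_pos_or_exists_first_zero (h₁.continuousOn_sub h₂ (Ici_subset_Ioi.2 hr₀))
    (sub_pos.2 hlt) with hpos | ⟨β, hβ, hzero, hpos⟩
  · exact h₁.radialWronskian_nonpos_of_forall_lt h₂ hlim₁ hlim₂ hr₀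
      fun x hx => sub_pos.1 (hpos x hx)
  · have hWβ := h₁.radialWronskian_nonpos_of_eq h₂ (hr₀.trans hβ) hβ (sub_eq_zero.1 hzero)
      fun x hx => sub_pos.1 (hpos x ⟨hx.1.le, hx.2⟩)
    have hmono := h₁.strictMonoOn_radialWronskian h₂ (convex_Icc r₀ β)
      (fun x hx => hr₀.trans_le hx.1) fun x hx => by
        rw [interior_Icc] at hx
        exact sub_pos.1 (hpos x ⟨hx.1.le, hx.2⟩)
    exact (hmono (left_mem_Icc.2 hβ.le) (right_mem_Icc.2 hβ.le) hβ).le.trans hWβ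

theorem radialWronskian_pos_of_lt (h₁ : IsPositiveProfileSolution P f₁)
    (h₂ : IsPositiveProfileSolution P f₂) (hO₁ : ∃ C > (0 : ℝ), ∀ r ∈ Ioc (0 : ℝ) 1, f₁ r ≤ C * r)
    {r₀ : ℝ} (hr₀ : 0 < r₀) (hlt : f₂ r₀ < f₁ r₀) : 0 < radialWronskian f₁ f₂ r₀ := by
  rcases forall_pos_or_exists_last_zero (h₁.continuousOn_sub h₂ Ioc_subset_Ioi_self)
    (sub_pos.2 hlt) with hpos | ⟨α, hα, hzero, hpos⟩
  · exact h₁.radialWronskian_pos_of_forall_lt h₂ hO₁ hr₀ fun x hx => sub_pos.1 (hpos x hx)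
  · have hWα := h₁.radialWronskian_nonneg_of_eq h₂ hα.1 hα.2 (sub_eq_zero.1 hzero)
      fun x hx => sub_pos.1 (hpos x ⟨hx.1, hx.2.le⟩)
    have hmono := h₁.strictMonoOn_radialWronskian h₂ (convex_Icc α r₀)
      (fun x hx => hα.1.trans_le hx.1) fun x hx => by
        rw [interior_Icc] at hx
        exact sub_pos.1 (hpos x ⟨hx.1, hx.2.le⟩)
    exact hWα.trans_lt (hmono (left_mem_Icc.2 hα.2.le) (right_mem_Icc.2 hα.2.le) hα.2)

theorem le_of_le_mul_of_tendsto_one (h₁ : IsPositiveProfileSolution P f₁)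
    (h₂ : IsPositiveProfileSolution P f₂) (hlim₁ : Tendsto f₁ atTop (𝓝 1))
    (hlim₂ : Tendsto f₂ atTop (𝓝 1)) (hO₁ : ∃ C > (0 : ℝ), ∀ r ∈ Ioc (0 : ℝ) 1, f₁ r ≤ C * r)
    {r : ℝ} (hr : r ∈ Ioi 0) : f₁ r ≤ f₂ r :=
  not_lt.1 fun hlt => (h₁.radialWronskian_pos_of_lt h₂ hO₁ hr hlt).not_ge
    (h₁.radialWronskian_nonpos_of_lt h₂ hlim₁ hlim₂ hr hlt)

end IsPositiveProfileSolution

theorem stmt6_general (a g f₁ f₂ : ℝ → ℝ)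
    (h₁ : ContDiffOn ℝ 2 f₁ (Ioi 0)) (h₂ : ContDiffOn ℝ 2 f₂ (Ioi 0))
    (hpos₁ : ∀ r ∈ Ioi (0:ℝ), 0 < f₁ r) (hpos₂ : ∀ r ∈ Ioi (0:ℝ), 0 < f₂ r)
    (hode₁ : ∀ r ∈ Ioi (0:ℝ),
      deriv (deriv f₁) r + (1 / r) * deriv f₁ r - ((a r) ^ 2 / r ^ 2) * f₁ r
        - (1 / 2) * ((f₁ r) ^ 2 + (g r) ^ 2 - 1) * f₁ r = 0)
    (hode₂ : ∀ r ∈ Ioi (0:ℝ),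
      deriv (deriv f₂) r + (1 / r) * deriv f₂ r - ((a r) ^ 2 / r ^ 2) * f₂ r
        - (1 / 2) * ((f₂ r) ^ 2 + (g r) ^ 2 - 1) * f₂ r = 0)
    (hlim₁ : Tendsto f₁ atTop (nhds 1)) (hlim₂ : Tendsto f₂ atTop (nhds 1))
    (hO₁ : ∃ C > (0:ℝ), ∀ r ∈ Ioc (0:ℝ) 1, f₁ r ≤ C * r)
    (hO₂ : ∃ C > (0:ℝ), ∀ r ∈ Ioc (0:ℝ) 1, f₂ r ≤ C * r) :
    ∀ r ∈ Ioi (0:ℝ), f₁ r = f₂ r := by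
  set P : ℝ → ℝ := fun r => a r ^ 2 / r ^ 2 + (g r ^ 2 - 1) / 2
  have hs₁ : IsPositiveProfileSolution P f₁ :=
    ⟨h₁, hpos₁, fun r hr => by linear_combination hode₁ r hr⟩
  have hs₂ : IsPositiveProfileSolution P f₂ :=
    ⟨h₂, hpos₂, fun r hr => by linear_combination hode₂ r hr⟩
  exact fun r hr => le_antisymm (hs₁.le_of_le_mul_of_tendsto_one hs₂ hlim₁ hlim₂ hO₁ hr)
    (hs₂.le_of_le_mul_of_tendsto_one hs₁ hlim₂ hlim₁ hO₂ hr)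

/-- Uniqueness of the Higgs profile: two positive C² solutions on `(0,∞)` of
`f'' + (1/r) f' - (a²/r²) f - (1/2)(f² + g² - 1) f = 0` with `f(0) = 0`,
`f(∞) = 1`, `f(r) = O(r)` near `0` and `1 - f` decaying exponentially at
infinity, coincide. -/
theorem stmt6 (a g f₁ f₂ : ℝ → ℝ)
    (ha : ContinuousOn a (Ici 0)) (hg : ContinuousOn g (Ici 0))
    (habd : ∀ r > (0:ℝ), 0 < a r ∧ a r < 1)
    (hgbd : ∃ C : ℝ, ∀ r ∈ Ici (0:ℝ), |g r| ≤ C)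
    (h₁ : ContDiffOn ℝ 2 f₁ (Ioi 0)) (h₂ : ContDiffOn ℝ 2 f₂ (Ioi 0))
    (hpos₁ : ∀ r ∈ Ioi (0:ℝ), 0 < f₁ r) (hpos₂ : ∀ r ∈ Ioi (0:ℝ), 0 < f₂ r)
    (hode₁ : ∀ r ∈ Ioi (0:ℝ),
      deriv (deriv f₁) r + (1 / r) * deriv f₁ r - ((a r) ^ 2 / r ^ 2) * f₁ r
        - (1 / 2) * ((f₁ r) ^ 2 + (g r) ^ 2 - 1) * f₁ r = 0)
    (hode₂ : ∀ r ∈ Ioi (0:ℝ),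
      deriv (deriv f₂) r + (1 / r) * deriv f₂ r - ((a r) ^ 2 / r ^ 2) * f₂ r
        - (1 / 2) * ((f₂ r) ^ 2 + (g r) ^ 2 - 1) * f₂ r = 0)
    (h0₁ : f₁ 0 = 0) (h0₂ : f₂ 0 = 0)
    (hlim₁ : Tendsto f₁ atTop (nhds 1)) (hlim₂ : Tendsto f₂ atTop (nhds 1))
    (hO₁ : ∃ C > (0:ℝ), ∀ r ∈ Ioc (0:ℝ) 1, f₁ r ≤ C * r)
    (hO₂ : ∃ C > (0:ℝ), ∀ r ∈ Ioc (0:ℝ) 1, f₂ r ≤ C * r)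
    (hdec₁ : ∃ C > (0:ℝ), ∃ c > (0:ℝ), ∀ r ≥ (1:ℝ), |1 - f₁ r| ≤ C * Real.exp (-c * r))
    (hdec₂ : ∃ C > (0:ℝ), ∃ c > (0:ℝ), ∀ r ≥ (1:ℝ), |1 - f₂ r| ≤ C * Real.exp (-c * r)) :
    ∀ r ∈ Ioi (0:ℝ), f₁ r = f₂ r :=
  stmt6_general a g f₁ f₂ h₁ h₂ hpos₁ hpos₂ hode₁ hode₂ hlim₁ hlim₂ hO₁ hO₂
end

section
/- Let f : [0,∞) → ℝ be continuous with f(0) = 0, f increasing, f(r) ≤ M₁ r for r ≤ 1, and let B > 0, β > 0. Then the integral equation ã(r) = B r² + (β²/2) ∫₀^r s (r²/s² - 1) f(s)² (ã(s) - 1) ds has a unique continuous solution ã on [0, δ] for δ = min{1, B^{-1/2}, M_*^{-1/2}} with M_* = B + (3β²/8) M₁², and this solution satisfies |ã(r) - B r²| ≤ (3β²/8) M₁² r⁴ for r ∈ [0, δ]. -/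
/-!
Write `p = f²`. Monotonicity and `f 0 = 0` give `0 ≤ f s ≤ M₁ s`, hence `|p s| ≤ M₁² s²`. Since
`s (r²/s² - 1) = r²/s - s ≥ 0` on `(0, r]`, integrating the kernel against a function bounded by `C`
gives at most `M₁² C ∫₀^r (r² s - s³) ds = M₁² C r⁴ / 4`. So the Picard map
`u ↦ B r² + (β²/2) ∫₀^r s (r²/s² - 1) p(s) (u(s) - 1) ds` is a contraction of `C([0, δ])`, and
it maps the closed tube `|u(r) - B r²| ≤ (3β²/8) M₁² r⁴` into itself: on the tube
`|u| ≤ M_* r² ≤ 1`, so `|u - 1| ≤ 2`. Banach's fixed point theorem gives the solution, the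
estimate, and uniqueness among all continuous solutions.
-/

open Filter Set MeasureTheory Topology

noncomputable def volterra (p w : ℝ → ℝ) (r : ℝ) : ℝ :=
  ∫ s in (0:ℝ)..r, s * (r ^ 2 / s ^ 2 - 1) * p s * w s

section Volterra

variable {p w : ℝ → ℝ} {K δ r : ℝ}

-- also at `s = 0`, where both sides are `0` because `r ^ 2 / 0 = 0`
lemma mul_div_sq_sub_one (r s : ℝ) : s * (r ^ 2 / s ^ 2 - 1) = r ^ 2 / s - s := by
  rcases eq_or_ne s 0 with rfl | hs
  · simp
  · field_simp

lemma abs_div_self_le (hpK : ∀ s ∈ Icc 0 δ, |p s| ≤ K * s ^ 2) :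
    ∀ s ∈ Icc 0 δ, |p s / s| ≤ K * s := by
  intro s hs
  rcases hs.1.eq_or_lt with rfl | hs0
  · simp
  · rw [abs_div, abs_of_pos hs0, div_le_iff₀ hs0]
    linarith [hpK s hs]

-- the junk value `p 0 / 0 = 0` is the right limit
lemma continuousOn_div_self (hp : ContinuousOn p (Icc 0 δ))
    (hpK : ∀ s ∈ Icc 0 δ, |p s| ≤ K * s ^ 2) : ContinuousOn (fun s => p s / s) (Icc 0 δ) := by
  intro s hs
  rcases hs.1.eq_or_lt with rfl | hs0
  · have hlim : Tendsto (fun s => K * s) (𝓝[Icc 0 δ] 0) (𝓝 0) := by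
      simpa using ((continuous_const_mul K).tendsto 0).mono_left nhdsWithin_le_nhds
    rw [ContinuousWithinAt, div_zero]
    refine squeeze_zero_norm' ?_ hlim
    filter_upwards [self_mem_nhdsWithin] with s hs
    exact abs_div_self_le hpK s hs
  · exact (hp s hs).div continuousWithinAt_id hs0.ne'

lemma ContinuousOn.intervalIntegrable_of_mem_Icc {g : ℝ → ℝ} (hg : ContinuousOn g (Icc 0 δ))
    (hr : r ∈ Icc 0 δ) : IntervalIntegrable g volume 0 r :=
  (hg.mono (Icc_subset_Icc_right hr.2)).intervalIntegrable_of_Icc hr.1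

lemma volterra_integrand_eq (p w : ℝ → ℝ) (r : ℝ) :
    (fun s => s * (r ^ 2 / s ^ 2 - 1) * p s * w s)
      = fun s => r ^ 2 * (p s / s * w s) - s * p s * w s := by
  ext s
  rw [mul_div_sq_sub_one]
  ring

lemma continuousOn_volterra (hδ : 0 ≤ δ) (hp : ContinuousOn p (Icc 0 δ))
    (hpK : ∀ s ∈ Icc 0 δ, |p s| ≤ K * s ^ 2) (hw : ContinuousOn w (Icc 0 δ)) :
    ContinuousOn (volterra p w) (Icc 0 δ) := by
  have hprim : ∀ g : ℝ → ℝ, ContinuousOn g (Icc 0 δ) →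
      ContinuousOn (fun r => ∫ s in (0:ℝ)..r, g s) (Icc 0 δ) := fun g hg => by
    rw [← uIcc_of_le hδ] at hg ⊢
    exact intervalIntegral.continuousOn_primitive_interval hg.integrableOn_uIcc
  have hq : ContinuousOn (fun s => p s / s * w s) (Icc 0 δ) :=
    (continuousOn_div_self hp hpK).mul hw
  have hs : ContinuousOn (fun s => s * p s * w s) (Icc 0 δ) := (continuousOn_id.mul hp).mul hw
  refine ((continuousOn_pow 2).mul (hprim _ hq) |>.sub (hprim _ hs)).congr fun r hr => ?_
  simp only [volterra, volterra_integrand_eq]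
  rw [intervalIntegral.integral_sub ((hq.intervalIntegrable_of_mem_Icc hr).const_mul _)
    (hs.intervalIntegrable_of_mem_Icc hr), intervalIntegral.integral_const_mul]
  rfl

lemma intervalIntegrable_volterra_integrand (hp : ContinuousOn p (Icc 0 δ))
    (hpK : ∀ s ∈ Icc 0 δ, |p s| ≤ K * s ^ 2) (hw : ContinuousOn w (Icc 0 δ)) (hr : r ∈ Icc 0 δ) :
    IntervalIntegrable (fun s => s * (r ^ 2 / s ^ 2 - 1) * p s * w s) volume 0 r := by
  rw [volterra_integrand_eq]
  exact ((continuousOn_const.mul ((continuousOn_div_self hp hpK).mul hw)).sub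
    ((continuousOn_id.mul hp).mul hw)).intervalIntegrable_of_mem_Icc hr

lemma volterra_sub {u v : ℝ → ℝ} (hp : ContinuousOn p (Icc 0 δ))
    (hpK : ∀ s ∈ Icc 0 δ, |p s| ≤ K * s ^ 2) (hu : ContinuousOn u (Icc 0 δ))
    (hv : ContinuousOn v (Icc 0 δ)) (hr : r ∈ Icc 0 δ) :
    volterra p u r - volterra p v r = volterra p (fun s => u s - v s) r := by
  rw [volterra, volterra, ← intervalIntegral.integral_sub
    (intervalIntegrable_volterra_integrand hp hpK hu hr)
    (intervalIntegrable_volterra_integrand hp hpK hv hr)]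
  simp only [volterra, mul_sub]

lemma volterra_congr {w' : ℝ → ℝ} (hr : 0 ≤ r) (h : EqOn w w' (Icc 0 r)) :
    volterra p w r = volterra p w' r := by
  refine intervalIntegral.integral_congr fun s hs => ?_
  rw [uIcc_of_le hr] at hs
  simp only [h hs]

lemma abs_volterra_le {C : ℝ} (hr : 0 ≤ r) (hpK : ∀ s ∈ Icc 0 r, |p s| ≤ K * s ^ 2)
    (hw : ∀ s ∈ Icc 0 r, |w s| ≤ C) : |volterra p w r| ≤ K * C * r ^ 4 / 4 := by
  have hbound : ∀ s ∈ Ioc 0 r,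
      ‖s * (r ^ 2 / s ^ 2 - 1) * p s * w s‖ ≤ K * C * (r ^ 2 * s - s ^ 3) := by
    intro s hs
    have hs' : s ∈ Icc 0 r := Ioc_subset_Icc_self hs
    have hkernel : 0 ≤ r ^ 2 / s - s := by
      rw [sub_nonneg, le_div_iff₀ hs.1]
      nlinarith [mul_self_le_mul_self hs.1.le hs.2]
    calc ‖s * (r ^ 2 / s ^ 2 - 1) * p s * w s‖ = (r ^ 2 / s - s) * (|p s| * |w s|) := by
          rw [Real.norm_eq_abs, mul_div_sq_sub_one, abs_mul, abs_mul, abs_of_nonneg hkernel,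
            mul_assoc]
      _ ≤ (r ^ 2 / s - s) * (K * s ^ 2 * C) := by
          gcongr
          · exact (abs_nonneg _).trans (hpK s hs')
          · exact hpK s hs'
          · exact hw s hs'
      _ = K * C * (r ^ 2 * s - s ^ 3) := by
          field_simp
  calc |volterra p w r| ≤ ∫ s in (0:ℝ)..r, K * C * (r ^ 2 * s - s ^ 3) :=
        intervalIntegral.norm_integral_le_of_norm_le hr (ae_of_all _ hbound)
          (Continuous.intervalIntegrable (by fun_prop) _ _)
    _ = K * C * r ^ 4 / 4 := by
        rw [intervalIntegral.integral_const_mul, intervalIntegral.integral_sub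
          (Continuous.intervalIntegrable (by fun_prop) _ _)
          (Continuous.intervalIntegrable (by fun_prop) _ _),
          intervalIntegral.integral_const_mul, integral_id, integral_pow]
        ring

end Volterra

section Picard

variable {p : ℝ → ℝ} {K δ : ℝ} (B c : ℝ) (hδ : 0 ≤ δ) (hp : ContinuousOn p (Icc 0 δ))
  (hpK : ∀ s ∈ Icc 0 δ, |p s| ≤ K * s ^ 2)

noncomputable def picard (u : C(Icc 0 δ, ℝ)) : C(Icc 0 δ, ℝ) where
  toFun x := B * (x : ℝ) ^ 2 + c * volterra p (fun s => IccExtend hδ u s - 1) x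
  continuous_toFun := ContinuousOn.domRestrict <|
    (continuousOn_const.mul (continuousOn_pow 2)).add <| continuousOn_const.mul <|
      continuousOn_volterra hδ hp hpK (u.continuous.Icc_extend'.sub continuous_const).continuousOn

lemma picard_apply (u : C(Icc 0 δ, ℝ)) (x : Icc 0 δ) :
    picard B c hδ hp hpK u x = B * (x : ℝ) ^ 2 + c * volterra p (fun s => IccExtend hδ u s - 1) x :=
  rfl

lemma abs_IccExtend_sub_le (u v : C(Icc 0 δ, ℝ)) (s : ℝ) :
    |IccExtend hδ u s - IccExtend hδ v s| ≤ dist u v :=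
  ContinuousMap.dist_apply_le_dist (f := u) (g := v) (projIcc 0 δ hδ s)

lemma abs_picard_sub_picard_le (u v : C(Icc 0 δ, ℝ)) (x : Icc 0 δ) :
    |picard B c hδ hp hpK u x - picard B c hδ hp hpK v x|
      ≤ |c| * K * (x : ℝ) ^ 4 / 4 * dist u v := by
  have hw : ∀ u : C(Icc 0 δ, ℝ), ContinuousOn (fun s => IccExtend hδ u s - 1) (Icc 0 δ) :=
    fun u => (u.continuous.Icc_extend'.sub continuous_const).continuousOn
  have hx0 : 0 ≤ (x : ℝ) := x.2.1
  have hsub : Icc 0 (x : ℝ) ⊆ Icc 0 δ := Icc_subset_Icc_right x.2.2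
  rw [picard_apply, picard_apply, add_sub_add_left_eq_sub, ← mul_sub,
    volterra_sub hp hpK (hw u) (hw v) x.2, abs_mul]
  calc |c| * |volterra p (fun s => IccExtend hδ u s - 1 - (IccExtend hδ v s - 1)) x|
      ≤ |c| * (K * dist u v * (x : ℝ) ^ 4 / 4) := by
        gcongr
        refine abs_volterra_le hx0 (fun s hs => hpK s (hsub hs)) fun s _ => ?_
        rw [sub_sub_sub_cancel_right]
        exact abs_IccExtend_sub_le hδ u v s
    _ = |c| * K * (x : ℝ) ^ 4 / 4 * dist u v := by ring

lemma contractingWith_picard {L : NNReal} (hL1 : L < 1)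
    (hL : ∀ x ∈ Icc 0 δ, |c| * K * x ^ 4 / 4 ≤ L) : ContractingWith L (picard B c hδ hp hpK) := by
  refine ⟨hL1, LipschitzWith.of_dist_le_mul fun u v => ?_⟩
  rw [ContinuousMap.dist_le (by positivity)]
  intro x
  rw [Real.dist_eq]
  exact (abs_picard_sub_picard_le B c hδ hp hpK u v x).trans
    (mul_le_mul_of_nonneg_right (hL x x.2) dist_nonneg)

def quadraticTube (B A δ : ℝ) : Set C(Icc 0 δ, ℝ) :=
  {u | ∀ x, |u x - B * (x : ℝ) ^ 2| ≤ A * (x : ℝ) ^ 4}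

lemma isClosed_quadraticTube (A : ℝ) : IsClosed (quadraticTube B A δ) := by
  simp only [quadraticTube, ofPred_forall]
  exact isClosed_iInter fun x =>
    isClosed_le ((continuous_eval_const x).sub continuous_const).abs continuous_const

lemma mapsTo_picard_quadraticTube {A : ℝ} (hA : |c| * K ≤ 2 * A)
    (hBA : ∀ x ∈ Icc 0 δ, |B| * x ^ 2 + A * x ^ 4 ≤ 1) :
    MapsTo (picard B c hδ hp hpK) (quadraticTube B A δ) (quadraticTube B A δ) := by
  intro u hu x
  have hsub : Icc 0 (x : ℝ) ⊆ Icc 0 δ := Icc_subset_Icc_right x.2.2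
  have hw : ∀ s ∈ Icc 0 (x : ℝ), |IccExtend hδ u s - 1| ≤ 2 := by
    intro s hs
    rw [IccExtend_of_mem hδ u (hsub hs)]
    have hu1 : |u ⟨s, hsub hs⟩| ≤ 1 := calc
      |u ⟨s, hsub hs⟩| ≤ |B * s ^ 2| + |u ⟨s, hsub hs⟩ - B * s ^ 2| :=
        sub_le_iff_le_add'.1 (abs_sub_abs_le_abs_sub _ _)
      _ ≤ |B| * s ^ 2 + A * s ^ 4 := by
        rw [abs_mul, abs_of_nonneg (sq_nonneg s)]
        gcongr
        exact hu ⟨s, hsub hs⟩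
      _ ≤ 1 := hBA s (hsub hs)
    linarith [abs_sub (u ⟨s, hsub hs⟩) 1, abs_one (α := ℝ)]
  have hx4 : 0 ≤ (x : ℝ) ^ 4 := by positivity
  rw [picard_apply, add_sub_cancel_left, abs_mul]
  calc |c| * |volterra p (fun s => IccExtend hδ u s - 1) x|
      ≤ |c| * (K * 2 * (x : ℝ) ^ 4 / 4) := by
        gcongr
        exact abs_volterra_le x.2.1 (fun s hs => hpK s (hsub hs)) hw
    _ = |c| * K * (x : ℝ) ^ 4 / 2 := by ring
    _ ≤ A * (x : ℝ) ^ 4 := by nlinarith [mul_le_mul_of_nonneg_right hA hx4]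

lemma isFixedPt_picard_of_solution {b : ℝ → ℝ} (hb : ContinuousOn b (Icc 0 δ))
    (hsol : ∀ r ∈ Icc 0 δ, b r = B * r ^ 2 + c * volterra p (fun s => b s - 1) r) :
    Function.IsFixedPt (picard B c hδ hp hpK) ⟨(Icc 0 δ).domRestrict b, hb.domRestrict⟩ := by
  ext x
  rw [picard_apply, volterra_congr (w' := fun s => b s - 1) x.2.1 fun s hs => ?_]
  · exact (hsol x x.2).symm
  · rw [IccExtend_of_mem hδ _ (Icc_subset_Icc_right x.2.2 hs)]
    rfl

end Picard

theorem exists_unique_volterra_solution {p : ℝ → ℝ} {K δ A : ℝ} (B c : ℝ) (hδ : 0 ≤ δ)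
    (hp : ContinuousOn p (Icc 0 δ)) (hpK : ∀ s ∈ Icc 0 δ, |p s| ≤ K * s ^ 2)
    (hA0 : 0 ≤ A) (hA : |c| * K ≤ 2 * A) (hBA : ∀ x ∈ Icc 0 δ, |B| * x ^ 2 + A * x ^ 4 ≤ 1) :
    ∃ a : ℝ → ℝ, ContinuousOn a (Icc 0 δ) ∧
      (∀ r ∈ Icc 0 δ, a r = B * r ^ 2 + c * volterra p (fun s => a s - 1) r) ∧
      (∀ r ∈ Icc 0 δ, |a r - B * r ^ 2| ≤ A * r ^ 4) ∧
      ∀ b : ℝ → ℝ, ContinuousOn b (Icc 0 δ) →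
        (∀ r ∈ Icc 0 δ, b r = B * r ^ 2 + c * volterra p (fun s => b s - 1) r) →
        EqOn a b (Icc 0 δ) := by
  have hT : ContractingWith (1 / 2) (picard B c hδ hp hpK) := by
    refine contractingWith_picard B c hδ hp hpK (by norm_num) fun x hx => ?_
    have hx4 : 0 ≤ x ^ 4 := by positivity
    norm_num
    nlinarith [mul_le_mul_of_nonneg_right hA hx4, hBA x hx, mul_nonneg (abs_nonneg B) (sq_nonneg x)]
  set u := ContractingWith.fixedPoint _ hT
  have hu : Function.IsFixedPt (picard B c hδ hp hpK) u := hT.fixedPoint_isFixedPt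
  have hu_tube : u ∈ quadraticTube B A δ := by
    let u₀ : C(Icc 0 δ, ℝ) := ⟨fun x => B * (x : ℝ) ^ 2, by fun_prop⟩
    have hu₀ : u₀ ∈ quadraticTube B A δ := fun x => by
      simpa [u₀] using mul_nonneg hA0 (pow_nonneg x.2.1 4)
    have hmaps := mapsTo_picard_quadraticTube B c hδ hp hpK hA hBA
    exact (isClosed_quadraticTube B A).mem_of_tendsto (hT.tendsto_iterate_fixedPoint u₀)
      (Eventually.of_forall fun n => hmaps.iterate n hu₀)
  refine ⟨IccExtend hδ u, u.continuous.Icc_extend'.continuousOn, fun r hr => ?_, fun r hr => ?_,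
    fun b hb hsol r hr => ?_⟩
  · rw [IccExtend_of_mem hδ u hr]
    exact (DFunLike.congr_fun hu ⟨r, hr⟩).symm
  · rw [IccExtend_of_mem hδ u hr]
    exact hu_tube ⟨r, hr⟩
  · have hb_eq : _ = u := hT.fixedPoint_unique (isFixedPt_picard_of_solution B c hδ hp hpK hb hsol)
    rw [IccExtend_of_mem hδ u hr, ← hb_eq]
    rfl

lemma mul_sq_le_one_of_le_inv_sqrt {M δ : ℝ} (hM : 0 < M) (hδ : 0 ≤ δ) (h : δ ≤ (√M)⁻¹) :
    M * δ ^ 2 ≤ 1 := by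
  rw [← Real.sqrt_inv, Real.le_sqrt hδ (inv_nonneg.2 hM.le)] at h
  calc M * δ ^ 2 ≤ M * M⁻¹ := by gcongr
    _ = 1 := mul_inv_cancel₀ hM.ne'

lemma abs_sq_le_of_monotoneOn {f : ℝ → ℝ} {M₁ s : ℝ} (hfmono : MonotoneOn f (Ici 0))
    (hf0 : f 0 = 0) (hs : 0 ≤ s) (hfs : f s ≤ M₁ * s) : |f s ^ 2| ≤ M₁ ^ 2 * s ^ 2 := by
  have hfs0 : 0 ≤ f s := hf0 ▸ hfmono self_mem_Ici hs hs
  rw [abs_of_nonneg (sq_nonneg _), ← mul_pow]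
  exact pow_le_pow_left₀ hfs0 hfs 2

theorem stmt7_general (β B M₁ : ℝ) (hB : B > 0)
    (f : ℝ → ℝ) (hf : ContinuousOn f (Ici 0)) (hfmono : MonotoneOn f (Ici 0))
    (hf0 : f 0 = 0) (hfbd : ∀ r ∈ Icc (0:ℝ) 1, f r ≤ M₁ * r) :
    ∃ δ : ℝ, δ = min 1 (min (Real.sqrt B)⁻¹ (Real.sqrt (B + 3 * β ^ 2 / 8 * M₁ ^ 2))⁻¹) ∧
      ∃ a : ℝ → ℝ, ContinuousOn a (Icc 0 δ) ∧
        (∀ r ∈ Icc (0:ℝ) δ,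
          a r = B * r ^ 2 + β ^ 2 / 2 *
            ∫ s in (0:ℝ)..r, s * (r ^ 2 / s ^ 2 - 1) * (f s) ^ 2 * (a s - 1)) ∧
        (∀ r ∈ Icc (0:ℝ) δ, |a r - B * r ^ 2| ≤ 3 * β ^ 2 / 8 * M₁ ^ 2 * r ^ 4) ∧
        (∀ b : ℝ → ℝ, ContinuousOn b (Icc 0 δ) →
          (∀ r ∈ Icc (0:ℝ) δ,
            b r = B * r ^ 2 + β ^ 2 / 2 *
              ∫ s in (0:ℝ)..r, s * (r ^ 2 / s ^ 2 - 1) * (f s) ^ 2 * (b s - 1)) →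
          EqOn a b (Icc 0 δ)) := by
  set M := B + 3 * β ^ 2 / 8 * M₁ ^ 2
  set δ := min 1 (min (Real.sqrt B)⁻¹ (Real.sqrt M)⁻¹)
  have hδ0 : 0 ≤ δ := le_min zero_le_one (le_min (by positivity) (by positivity))
  have hδ1 : δ ≤ 1 := min_le_left _ _
  have hMδ : M * δ ^ 2 ≤ 1 :=
    mul_sq_le_one_of_le_inv_sqrt (by positivity) hδ0 ((min_le_right _ _).trans (min_le_right _ _))
  have hfK : ∀ s ∈ Icc 0 δ, |f s ^ 2| ≤ M₁ ^ 2 * s ^ 2 := fun s hs =>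
    abs_sq_le_of_monotoneOn hfmono hf0 hs.1 (hfbd s ⟨hs.1, hs.2.trans hδ1⟩)
  have hBA : ∀ x ∈ Icc 0 δ, |B| * x ^ 2 + 3 * β ^ 2 / 8 * M₁ ^ 2 * x ^ 4 ≤ 1 := by
    intro x hx
    have hx4 : x ^ 4 ≤ x ^ 2 := pow_le_pow_of_le_one hx.1 (hx.2.trans hδ1) (by norm_num)
    calc |B| * x ^ 2 + 3 * β ^ 2 / 8 * M₁ ^ 2 * x ^ 4
        ≤ B * x ^ 2 + 3 * β ^ 2 / 8 * M₁ ^ 2 * x ^ 2 := by rw [abs_of_pos hB]; gcongr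
      _ = M * x ^ 2 := by ring
      _ ≤ M * δ ^ 2 := by gcongr; exacts [hx.1, hx.2]
      _ ≤ 1 := hMδ
  exact ⟨δ, rfl, exists_unique_volterra_solution B (β ^ 2 / 2) hδ0
    ((hf.mono Icc_subset_Ici_self).pow 2) hfK (by positivity)
    (by rw [abs_of_nonneg (by positivity)]; nlinarith [sq_nonneg (β * M₁)]) hBA⟩

/-- Local existence and uniqueness near `r = 0` for the integral equation
`ã(r) = B r² + (β²/2) ∫₀^r s (r²/s² - 1) f(s)² (ã(s) - 1) ds` on `[0, δ]` with
`δ = min{1, B^{-1/2}, M_*^{-1/2}}`, `M_* = B + (3β²/8) M₁²`, together with the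
estimate `|ã(r) - B r²| ≤ (3β²/8) M₁² r⁴`. -/
theorem stmt7 (β B M₁ : ℝ) (hβ : β > 0) (hB : B > 0) (hM₁ : M₁ > 0)
    (f : ℝ → ℝ) (hf : ContinuousOn f (Ici 0)) (hfmono : MonotoneOn f (Ici 0))
    (hf0 : f 0 = 0) (hfbd : ∀ r ∈ Icc (0:ℝ) 1, f r ≤ M₁ * r) :
    ∃ δ : ℝ, δ = min 1 (min (Real.sqrt B)⁻¹ (Real.sqrt (B + 3 * β ^ 2 / 8 * M₁ ^ 2))⁻¹) ∧
      ∃ a : ℝ → ℝ, ContinuousOn a (Icc 0 δ) ∧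
        (∀ r ∈ Icc (0:ℝ) δ,
          a r = B * r ^ 2 + β ^ 2 / 2 *
            ∫ s in (0:ℝ)..r, s * (r ^ 2 / s ^ 2 - 1) * (f s) ^ 2 * (a s - 1)) ∧
        (∀ r ∈ Icc (0:ℝ) δ, |a r - B * r ^ 2| ≤ 3 * β ^ 2 / 8 * M₁ ^ 2 * r ^ 4) ∧
        (∀ b : ℝ → ℝ, ContinuousOn b (Icc 0 δ) →
          (∀ r ∈ Icc (0:ℝ) δ,
            b r = B * r ^ 2 + β ^ 2 / 2 *
              ∫ s in (0:ℝ)..r, s * (r ^ 2 / s ^ 2 - 1) * (f s) ^ 2 * (b s - 1)) →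
          EqOn a b (Icc 0 δ)) :=
  stmt7_general β B M₁ hB f hf hfmono hf0 hfbd
end

section
/- Let α ∈ (0, 1/√2), λ ≥ √(1 - 2α²), and let f : [0,∞) → ℝ be continuous with 0 ≤ f ≤ 1. If g is the solution of g'' + (1/r) g' - α² g - (1/2)(f² + g² - 1) g = 0 with g(0) = λ, g'(0) = 0 on its maximal interval of existence, then g(r) ≥ √(1 - 2α²) and g'(r) ≥ 0 throughout; in particular g cannot satisfy g(∞) = 0. -/
/-!
Put `G = (α² + (f² + g² - 1) / 2) g`, so that the equation reads `(r g')' = r G`. As `g` is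
continuous at `0`, the constant `lim_{r → 0} r g'(r)` vanishes (otherwise `g` would grow like
`log r`), hence `r g'(r) = ∫₀ʳ s G(s) ds`. With `μ = √(1 - 2α²)` we have
`G = (f² + g² - μ²) g / 2`, which is `≥ 0` where `g ≥ μ` and `≥ -μ² (μ - g)` where `0 < g < μ`.
By continuous induction, `g ≥ μ` and `∫₀ʳ s G ≥ 0` persist: where they hold, a Gronwall-type
estimate on a short window keeps `g` from dipping below `μ`. So `g ≥ μ > 0` and `g' ≥ 0`.
-/

open Filter Set Topology

section LogBlowup

variable {u : ℝ → ℝ} {u₀ c : ℝ}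

lemma tendsto_atBot_of_tendsto_mul_deriv_pos (hu : ∀ r > 0, DifferentiableAt ℝ u r)
    (hc : 0 < c) (h : Tendsto (fun r => r * deriv u r) (𝓝[>] 0) (𝓝 c)) :
    Tendsto u (𝓝[>] 0) atBot := by
  obtain ⟨δ, hδ, hsub⟩ :=
    mem_nhdsGT_iff_exists_Ioc_subset.mp (h.eventually (eventually_gt_nhds (half_lt_self hc)))
  -- `r u'(r) > c/2` makes `u - (c/2) log` nondecreasing on `(0, δ]`
  have hmono : MonotoneOn (fun r => u r - c / 2 * Real.log r) (Ioc 0 δ) := by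
    refine monotoneOn_of_hasDerivWithinAt_nonneg (f' := fun r => deriv u r - c / 2 * r⁻¹)
      (convex_Ioc 0 δ) (fun r hr => ?_) (fun r hr => ?_) (fun r hr => ?_)
    · exact ((hu r hr.1).continuousAt.sub
        (continuousAt_const.mul (Real.continuousAt_log hr.1.ne'))).continuousWithinAt
    · rw [interior_Ioc] at hr
      exact ((hu r hr.1).hasDerivAt.sub
        ((Real.hasDerivAt_log hr.1.ne').const_mul _)).hasDerivWithinAt
    · rw [interior_Ioc] at hr
      have hr' : c / 2 < r * deriv u r := hsub ⟨hr.1, hr.2.le⟩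
      rw [sub_nonneg, ← div_eq_mul_inv, div_le_iff₀ hr.1]
      linarith
  have hbound : ∀ r ∈ Ioc 0 δ, u r ≤ (u δ - c / 2 * Real.log δ) + c / 2 * Real.log r :=
    fun r hr => by linarith [hmono hr ⟨hδ, le_rfl⟩ hr.2]
  exact tendsto_atBot_mono' _ (eventually_of_mem (Ioc_mem_nhdsGT hδ) hbound)
    (tendsto_atBot_add_const_left _ _ (Real.tendsto_log_nhdsGT_zero.const_mul_atBot (half_pos hc)))

lemma eq_zero_of_tendsto_mul_deriv (hu : ∀ r > 0, DifferentiableAt ℝ u r)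
    (hu₀ : Tendsto u (𝓝[>] 0) (𝓝 u₀)) (h : Tendsto (fun r => r * deriv u r) (𝓝[>] 0) (𝓝 c)) :
    c = 0 := by
  rcases lt_trichotomy c 0 with hc | hc | hc
  · have hneg : Tendsto (fun r => r * deriv (-u) r) (𝓝[>] 0) (𝓝 (-c)) := by
      simpa only [deriv.neg', mul_neg] using h.neg
    exact absurd hu₀.neg (not_tendsto_nhds_of_tendsto_atBot
      (tendsto_atBot_of_tendsto_mul_deriv_pos (fun r hr => (hu r hr).neg) (neg_pos.2 hc) hneg) _)
  · exact hc
  · exact absurd hu₀ (not_tendsto_nhds_of_tendsto_atBot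
      (tendsto_atBot_of_tendsto_mul_deriv_pos hu hc h) _)

end LogBlowup

lemma intervalIntegrable_of_continuousOn_Ici {G : ℝ → ℝ} (hG : ContinuousOn G (Ici 0)) {a b : ℝ}
    (ha : 0 ≤ a) (hb : 0 ≤ b) : IntervalIntegrable G MeasureTheory.volume a b :=
  (hG.mono fun _ hx => le_trans (le_min ha hb) hx.1).intervalIntegrable

lemma mul_deriv_eq_integral {g G : ℝ → ℝ} (hg : ContinuousOn g (Ici 0))
    (hgd : ∀ r > 0, DifferentiableAt ℝ g r) (hG : ContinuousOn G (Ici 0))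
    (hH : ∀ r > 0, HasDerivAt (fun s => s * deriv g s) (r * G r) r) {r : ℝ} (hr : 0 ≤ r) :
    r * deriv g r = ∫ s in 0..r, s * G s := by
  rcases hr.eq_or_lt with rfl | hr
  · simp
  have hint {a b : ℝ} (ha : 0 ≤ a) (hb : 0 ≤ b) :
      IntervalIntegrable (fun s => s * G s) MeasureTheory.volume a b :=
    intervalIntegrable_of_continuousOn_Ici (continuousOn_id.mul hG) ha hb
  have hftc : ∀ a ∈ Ioc 0 r, a * deriv g a
      = (r * deriv g r - ∫ s in 0..r, s * G s) + ∫ s in 0..a, s * G s := by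
    intro a ha
    have hsub : uIcc a r ⊆ Ioi 0 := by
      rw [uIcc_of_le ha.2]; exact fun x hx => ha.1.trans_le hx.1
    have h := intervalIntegral.integral_eq_sub_of_hasDerivAt (fun x hx => hH x (hsub hx))
      (hint ha.1.le hr.le)
    rw [← intervalIntegral.integral_add_adjacent_intervals (hint le_rfl ha.1.le)
      (hint ha.1.le hr.le)]
    linarith
  have hP : Tendsto (fun a => ∫ s in 0..a, s * G s) (𝓝[>] 0) (𝓝 0) := by
    have h := intervalIntegral.continuousOn_primitive_interval' (hint le_rfl zero_le_one)
      left_mem_uIcc 0 left_mem_uIcc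
    have h' := (h.mono_of_mem_nhdsWithin (by
      rw [uIcc_of_le zero_le_one]; exact Icc_mem_nhdsGT zero_lt_one)).tendsto
    rwa [intervalIntegral.integral_same] at h'
  have hlim := (tendsto_const_nhds (x := r * deriv g r - ∫ s in 0..r, s * G s)).add hP
  rw [add_zero] at hlim
  -- a nonzero limit of `r g'(r)` at `0` would make `g` blow up logarithmically
  have hc := eq_zero_of_tendsto_mul_deriv hgd
    ((hg 0 self_mem_Ici).mono_left (nhdsWithin_mono _ Ioi_subset_Ici_self))
    (hlim.congr' (eventually_of_mem (Ioc_mem_nhdsGT hr) fun a ha => (hftc a ha).symm))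
  linarith

section Comparison

variable {g G : ℝ → ℝ} {μ C : ℝ}

lemma neg_mul_sub_le_deriv (hG : ContinuousOn G (Ici 0))
    (hid : ∀ r ≥ 0, r * deriv g r = ∫ s in 0..r, s * G s) {x r K : ℝ} (hx : 0 ≤ x)
    (hxr : x < r) (hK : 0 ≤ K) (hPx : 0 ≤ ∫ s in 0..x, s * G s)
    (hGK : ∀ s ∈ Icc x r, -K ≤ G s) :
    -(K * (r - x)) ≤ deriv g r := by
  have hr : 0 < r := hx.trans_lt hxr
  have hint {a b : ℝ} (ha : 0 ≤ a) (hb : 0 ≤ b) :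
      IntervalIntegrable (fun s => s * G s) MeasureTheory.volume a b :=
    intervalIntegrable_of_continuousOn_Ici (continuousOn_id.mul hG) ha hb
  have hlow : ∫ _ in x..r, -(K * r) ≤ ∫ s in x..r, s * G s :=
    intervalIntegral.integral_mono_on hxr.le intervalIntegrable_const (hint hx hr.le)
      fun s hs => by nlinarith [hGK s hs, hs.1, hs.2]
  rw [intervalIntegral.integral_const, smul_eq_mul] at hlow
  have hrg : r * -(K * (r - x)) ≤ r * deriv g r := by
    rw [hid r hr.le, ← intervalIntegral.integral_add_adjacent_intervals (hint le_rfl hx)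
      (hint hx hr.le)]
    nlinarith
  exact le_of_mul_le_mul_left hrg hr

lemma exists_pos_forall_Icc_le (hμ : 0 < μ) (hC : 0 ≤ C) (hg : ContinuousOn g (Ici 0))
    (hgd : ∀ r > 0, DifferentiableAt ℝ g r) (hG : ContinuousOn G (Ici 0))
    (hid : ∀ r ≥ 0, r * deriv g r = ∫ s in 0..r, s * G s)
    (hGlow : ∀ s ≥ 0, 0 < g s → -(C * max (μ - g s) 0) ≤ G s)
    {x : ℝ} (hx : 0 ≤ x) (hgx : μ ≤ g x) (hPx : 0 ≤ ∫ s in 0..x, s * G s) :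
    ∃ δ > 0, ∀ r ∈ Icc x (x + δ), μ ≤ g r := by
  obtain ⟨b, hxb, hpos⟩ := mem_nhdsGE_iff_exists_Icc_subset.mp <|
    ((hg x hx).mono_left (nhdsWithin_mono _ (Ici_subset_Ici.2 hx))).eventually
      (eventually_gt_nhds (hμ.trans_le hgx))
  set δ := min (b - x) (1 / (C + 1))
  have hδ : 0 < δ := lt_min (sub_pos.2 hxb) (by positivity)
  have hCδ : C * δ ^ 2 < 1 := by
    have h1 : δ * (C + 1) ≤ 1 := (le_div_iff₀ (by positivity)).1 (min_le_right _ _)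
    nlinarith
  set W := Icc x (x + δ)
  have hWpos : ∀ r ∈ W, 0 < g r := fun r hr =>
    hpos ⟨hr.1, hr.2.trans (by linarith [min_le_left (b - x) (1 / (C + 1))])⟩
  have hWnn : W ⊆ Ici 0 := fun r hr => hx.trans hr.1
  -- Gronwall-type bootstrap: the largest deficit `M` of `g` below `μ` on the window
  -- satisfies `M ≤ C δ² M` with `C δ² < 1`
  obtain ⟨ξ, hξ, hmax⟩ := isCompact_Icc.exists_isMaxOn (f := fun r => max (μ - g r) 0)
    (nonempty_Icc.2 (by linarith)) ((continuousOn_const.sub (hg.mono hWnn)).sup continuousOn_const)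
  set M := max (μ - g ξ) 0
  have hM : 0 ≤ M := le_max_right _ _
  have hdef : ∀ r ∈ W, max (μ - g r) 0 ≤ M := fun r hr => isMaxOn_iff.mp hmax r hr
  have hGM : ∀ s ∈ W, -(C * M) ≤ G s := fun s hs =>
    (neg_le_neg (mul_le_mul_of_nonneg_left (hdef s hs) hC)).trans
      (hGlow s (hWnn hs) (hWpos s hs))
  have hderiv : ∀ r ∈ interior W, -(C * M * δ) ≤ deriv g r := by
    rw [interior_Icc]
    intro r hr
    have := neg_mul_sub_le_deriv hG hid hx hr.1 (mul_nonneg hC hM) hPx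
      fun s hs => hGM s ⟨hs.1, hs.2.trans hr.2.le⟩
    nlinarith [mul_le_mul_of_nonneg_left (by linarith [hr.2] : r - x ≤ δ) (mul_nonneg hC hM)]
  have hlow : ∀ r ∈ W, μ - C * M * δ ^ 2 ≤ g r := by
    intro r hr
    have := (convex_Icc x (x + δ)).mul_sub_le_image_sub_of_le_deriv (hg.mono hWnn)
      (fun s hs => (hgd s (hx.trans_lt (by rw [interior_Icc] at hs; exact hs.1)))
        |>.differentiableWithinAt)
      hderiv x (left_mem_Icc.2 (by linarith)) r hr hr.1
    nlinarith [mul_le_mul_of_nonneg_left (by linarith [hr.2] : r - x ≤ δ)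
      (mul_nonneg (mul_nonneg hC hM) hδ.le)]
  have hM0 : M = 0 := by
    have : M ≤ C * M * δ ^ 2 := max_le (by linarith [hlow ξ hξ]) (by positivity)
    nlinarith
  exact ⟨δ, hδ, fun r hr => by linarith [le_max_left (μ - g r) 0, hdef r hr]⟩

lemma le_and_integral_nonneg (hμ : 0 < μ) (hC : 0 ≤ C) (hg : ContinuousOn g (Ici 0))
    (hgd : ∀ r > 0, DifferentiableAt ℝ g r) (hG : ContinuousOn G (Ici 0))
    (hid : ∀ r ≥ 0, r * deriv g r = ∫ s in 0..r, s * G s)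
    (hGlow : ∀ s ≥ 0, 0 < g s → -(C * max (μ - g s) 0) ≤ G s) (hg0 : μ ≤ g 0)
    {b : ℝ} (hb : 0 ≤ b) :
    μ ≤ g b ∧ 0 ≤ ∫ s in 0..b, s * G s := by
  have hGnn : ∀ s ≥ 0, μ ≤ g s → 0 ≤ G s := fun s hs hgs => by
    simpa [max_eq_right (sub_nonpos.2 hgs)] using hGlow s hs (hμ.trans_le hgs)
  have hint {a b : ℝ} (ha : 0 ≤ a) (hb : 0 ≤ b) :
      IntervalIntegrable (fun s => s * G s) MeasureTheory.volume a b :=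
    intervalIntegrable_of_continuousOn_Ici (continuousOn_id.mul hG) ha hb
  set S := {r | μ ≤ g r ∧ 0 ≤ ∫ s in 0..r, s * G s}
  have hP : ContinuousOn (fun r => ∫ s in 0..r, s * G s) (Icc 0 b) := by
    simpa [uIcc_of_le hb] using
      intervalIntegral.continuousOn_primitive_interval' (hint le_rfl hb) left_mem_uIcc
  have hclosed : IsClosed (S ∩ Icc 0 b) := by
    convert (isClosed_Icc.isClosed_le continuousOn_const (hg.mono Icc_subset_Ici_self)).inter
      (isClosed_Icc.isClosed_le continuousOn_const hP) using 1
    ext r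
    simp only [S, mem_inter_iff, mem_ofPred_eq]
    tauto
  refine hclosed.Icc_subset_of_forall_mem_nhdsWithin (by simpa [S] using hg0) ?_ ⟨hb, le_rfl⟩
  rintro x ⟨⟨hgx, hPx⟩, hx, -⟩
  obtain ⟨δ, hδ, hW⟩ := exists_pos_forall_Icc_le hμ hC hg hgd hG hid hGlow hx hgx hPx
  filter_upwards [Ioc_mem_nhdsGT (by linarith : x < x + δ)] with r hr
  refine ⟨hW r (Ioc_subset_Icc_self hr), ?_⟩
  rw [← intervalIntegral.integral_add_adjacent_intervals (hint le_rfl hx)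
    (hint hx (hx.trans hr.1.le))]
  exact add_nonneg hPx (intervalIntegral.integral_nonneg hr.1.le fun s hs =>
    mul_nonneg (hx.trans hs.1) (hGnn s (hx.trans hs.1) (hW s ⟨hs.1, hs.2.trans hr.2⟩)))

end Comparison

lemma neg_sq_mul_max_sub_le (x : ℝ) {μ y : ℝ} (hμ : 0 < μ) (hy : 0 < y) :
    -(μ ^ 2 * max (μ - y) 0) ≤ (x ^ 2 + y ^ 2 - μ ^ 2) / 2 * y := by
  rcases le_total μ y with h | h
  · rw [max_eq_right (sub_nonpos.2 h)]
    nlinarith [sq_nonneg x, mul_le_mul h h hμ.le hy.le]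
  · rw [max_eq_left (sub_nonneg.2 h)]
    have hd := mul_nonneg (sub_nonneg.2 h) hy.le
    nlinarith [sq_nonneg x, mul_nonneg hd (sub_nonneg.2 h)]

theorem stmt8_general (α lam : ℝ) (hα : α ∈ Ioo (0:ℝ) (1 / Real.sqrt 2))
    (hlam : lam ≥ Real.sqrt (1 - 2 * α ^ 2)) (f g : ℝ → ℝ)
    (hf : ContinuousOn f (Ici 0))
    (hgC : ContinuousOn g (Ici 0)) (hg2 : ContDiffOn ℝ 2 g (Ioi 0))
    (hode : ∀ r ∈ Ioi (0:ℝ),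
      deriv (deriv g) r + (1 / r) * deriv g r - α ^ 2 * g r
        - (1 / 2) * ((f r) ^ 2 + (g r) ^ 2 - 1) * g r = 0)
    (hg0 : g 0 = lam) :
    (∀ r ∈ Ioi (0:ℝ), Real.sqrt (1 - 2 * α ^ 2) ≤ g r ∧ 0 ≤ deriv g r) ∧
      ¬ Tendsto g atTop (nhds 0) := by
  set μ := Real.sqrt (1 - 2 * α ^ 2)
  have hα2 : 2 * α ^ 2 < 1 := by
    have h : α * Real.sqrt 2 < 1 := (lt_div_iff₀ (by positivity)).1 hα.2
    nlinarith [Real.sq_sqrt zero_le_two, mul_pos hα.1 (Real.sqrt_pos.2 two_pos)]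
  have hμ : 0 < μ := Real.sqrt_pos.2 (by linarith)
  have hμsq : μ ^ 2 = 1 - 2 * α ^ 2 := Real.sq_sqrt (by linarith)
  set G := fun s => (α ^ 2 + ((f s) ^ 2 + (g s) ^ 2 - 1) / 2) * g s
  have hgd : ∀ r > 0, DifferentiableAt ℝ g r := fun r hr =>
    (hg2.differentiableOn two_ne_zero r hr).differentiableAt (Ioi_mem_nhds hr)
  have hg'd : ∀ r > 0, DifferentiableAt ℝ (deriv g) r := fun r hr =>
    ((hg2.deriv_of_isOpen isOpen_Ioi (by norm_num)).differentiableOn one_ne_zero r hr)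
      |>.differentiableAt (Ioi_mem_nhds hr)
  have hG : ContinuousOn G (Ici 0) := (continuousOn_const.add
    ((((hf.pow 2).add (hgC.pow 2)).sub continuousOn_const).div_const 2)).mul hgC
  have hH : ∀ r > 0, HasDerivAt (fun s => s * deriv g s) (r * G r) r := fun r hr => by
    refine ((hasDerivAt_id' r).mul (hg'd r hr).hasDerivAt).congr_deriv ?_
    have hGr : deriv (deriv g) r + 1 / r * deriv g r = G r := by
      simp only [G]
      linarith [hode r hr]
    rw [← hGr]
    field_simp
    ring
  have hid := fun r (hr : r ≥ 0) => mul_deriv_eq_integral hgC hgd hG hH hr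
  have hGlow : ∀ s ≥ 0, 0 < g s → -(μ ^ 2 * max (μ - g s) 0) ≤ G s := fun s _ hs => by
    convert neg_sq_mul_max_sub_le (f s) hμ hs using 1
    simp only [G]
    rw [hμsq]
    ring
  have hmain := fun r (hr : r ≥ 0) =>
    le_and_integral_nonneg hμ (sq_nonneg μ) hgC hgd hG hid hGlow (hg0 ▸ hlam) hr
  refine ⟨fun r hr => ⟨(hmain r hr.le).1, ?_⟩, fun hT => ?_⟩
  · exact nonneg_of_mul_nonneg_right ((hid r hr.le).symm ▸ (hmain r hr.le).2) hr
  · obtain ⟨r, hr, hr0⟩ :=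
      ((hT.eventually (eventually_lt_nhds hμ)).and (eventually_ge_atTop 0)).exists
    exact hr.not_ge (hmain r hr0).1

/-- Shooting from above the equilibrium: if `α ∈ (0, 1/√2)`, `λ ≥ √(1-2α²)`,
`0 ≤ f ≤ 1`, and `g` solves `g'' + (1/r) g' - α² g - (1/2)(f² + g² - 1) g = 0`
with `g(0) = λ`, `g'(0) = 0`, then `g ≥ √(1-2α²)` and `g' ≥ 0` throughout, and
`g` cannot tend to `0` at infinity. -/
theorem stmt8 (α lam : ℝ) (hα : α ∈ Ioo (0:ℝ) (1 / Real.sqrt 2))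
    (hlam : lam ≥ Real.sqrt (1 - 2 * α ^ 2)) (f g : ℝ → ℝ)
    (hf : ContinuousOn f (Ici 0)) (hfbd : ∀ r ∈ Ici (0:ℝ), 0 ≤ f r ∧ f r ≤ 1)
    (hgC : ContinuousOn g (Ici 0)) (hg2 : ContDiffOn ℝ 2 g (Ioi 0))
    (hode : ∀ r ∈ Ioi (0:ℝ),
      deriv (deriv g) r + (1 / r) * deriv g r - α ^ 2 * g r
        - (1 / 2) * ((f r) ^ 2 + (g r) ^ 2 - 1) * g r = 0)
    (hg0 : g 0 = lam) (hg0' : deriv g 0 = 0) :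
    (∀ r ∈ Ioi (0:ℝ), Real.sqrt (1 - 2 * α ^ 2) ≤ g r ∧ 0 ≤ deriv g r) ∧
      ¬ Tendsto g atTop (nhds 0) :=
  stmt8_general α lam hα hlam f g hf hgC hg2 hode hg0
end

section
/- Let a, g : [0,∞) → ℝ be continuous with a(r) → 0 and g(r) → 0 as r → ∞. Suppose f̃ : [0,∞) → ℝ is C² on (0,∞), satisfies f̃'' + (1/r) f̃' - (a²/r²) f̃ - (1/2)(f̃² + g² - 1) f̃ = 0, and 0 < f̃(r) < 1 with f̃'(r) ≥ 0 for all r > 0. Then f̃(r) → 1 as r → ∞. -/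
/-!
The bounded nondecreasing profile `F` has a limit `l ∈ (0, 1]`. If `l < 1`, then for large `r`
the equation gives `F'' ≤ (1/4)(l² - 1) l < 0`, because the damping term `F'/r` is nonnegative,
`a²F/r² → 0` and `(1/2)(F² + g² - 1)F → (1/2)(l² - 1) l`. This drives `F'` to `-∞`,
contradicting `F' ≥ 0`.
-/

open Filter Set Topology

theorem MonotoneOn.exists_tendsto_atTop {f : ℝ → ℝ} {b : ℝ} (hf : MonotoneOn f (Ioi b))
    (hbdd : BddAbove (f '' Ioi b)) : ∃ l, Tendsto f atTop (𝓝 l) := by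
  have hmem : ∀ x, max x (b + 1) ∈ Ioi b := fun x =>
    (lt_add_one b).trans_le (le_max_right _ _)
  set g : ℝ → ℝ := fun x => f (max x (b + 1))
  have hg : Monotone g := fun x y hxy => hf (hmem x) (hmem y) (max_le_max_right _ hxy)
  have hgbdd : BddAbove (range g) :=
    hbdd.mono (range_subset_iff.2 fun x => mem_image_of_mem f (hmem x))
  refine ⟨_, (tendsto_atTop_ciSup hg hgbdd).congr' ?_⟩
  filter_upwards [eventually_ge_atTop (b + 1)] with x hx
  simp only [g, max_eq_left hx]

theorem tendsto_atBot_of_hasDerivAt_le_neg {u u' : ℝ → ℝ} {c : ℝ} (hc : 0 < c)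
    (hu : ∀ᶠ x in atTop, HasDerivAt u (u' x) x) (hu' : ∀ᶠ x in atTop, u' x ≤ -c) :
    Tendsto u atTop atBot := by
  obtain ⟨R, hR⟩ := (hu.and hu').exists_forall_of_atTop
  have hbound : ∀ x ≥ R, u x ≤ u R + -c * (x - R) := by
    intro x hx
    have := (convex_Ici R).image_sub_le_mul_sub_of_deriv_le
      (fun y hy => (hR y hy).1.continuousAt.continuousWithinAt)
      (by
        rw [interior_Ici]
        exact fun y hy => (hR y hy.le).1.differentiableAt.differentiableWithinAt)
      (by
        rw [interior_Ici]
        intro y hy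
        rw [(hR y hy.le).1.deriv]
        exact (hR y hy.le).2)
      R self_mem_Ici x hx hx
    linarith
  refine tendsto_atBot_mono' _ (eventually_atTop.2 ⟨R, hbound⟩) ?_
  exact tendsto_atBot_add_const_left _ _
    ((tendsto_atTop_add_const_right _ _ tendsto_id).const_mul_atTop_of_neg (neg_lt_zero.2 hc))

theorem eventually_deriv_deriv_lt (a g F : ℝ → ℝ)
    (halim : Tendsto a atTop (𝓝 0)) (hglim : Tendsto g atTop (𝓝 0))
    (hode : ∀ r ∈ Ioi (0:ℝ),
      deriv (deriv F) r + (1 / r) * deriv F r - ((a r) ^ 2 / r ^ 2) * F r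
        - (1 / 2) * ((F r) ^ 2 + (g r) ^ 2 - 1) * F r = 0)
    (hmono : ∀ r ∈ Ioi (0:ℝ), 0 ≤ deriv F r) {l m : ℝ} (hl : Tendsto F atTop (𝓝 l))
    (hm : 1 / 2 * (l ^ 2 - 1) * l < m) :
    ∀ᶠ r in atTop, deriv (deriv F) r < m := by
  have hpot : Tendsto (fun r => (a r) ^ 2 / r ^ 2) atTop (𝓝 0) :=
    (halim.pow 2).div_atTop (tendsto_pow_atTop two_ne_zero)
  have hrest : Tendsto (fun r => (a r) ^ 2 / r ^ 2 * F r
      + 1 / 2 * ((F r) ^ 2 + (g r) ^ 2 - 1) * F r) atTop (𝓝 (1 / 2 * (l ^ 2 - 1) * l)) := by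
    convert (hpot.mul hl).add
      (((((hl.pow 2).add (hglim.pow 2)).sub_const 1).const_mul (1 / 2)).mul hl) using 2
    ring
  filter_upwards [hrest.eventually_lt_const hm, eventually_gt_atTop 0] with r hr hr0
  have hdrift : 0 ≤ 1 / r * deriv F r := mul_nonneg (by positivity) (hmono r hr0)
  linarith [hode r hr0]

theorem stmt12_general (a g F : ℝ → ℝ)
    (halim : Tendsto a atTop (nhds 0)) (hglim : Tendsto g atTop (nhds 0))
    (hF2 : ContDiffOn ℝ 2 F (Ioi 0))
    (hode : ∀ r ∈ Ioi (0:ℝ),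
      deriv (deriv F) r + (1 / r) * deriv F r - ((a r) ^ 2 / r ^ 2) * F r
        - (1 / 2) * ((F r) ^ 2 + (g r) ^ 2 - 1) * F r = 0)
    (hbd : ∀ r ∈ Ioi (0:ℝ), 0 < F r ∧ F r < 1)
    (hmono : ∀ r ∈ Ioi (0:ℝ), 0 ≤ deriv F r) :
    Tendsto F atTop (nhds 1) := by
  have hFmono : MonotoneOn F (Ioi 0) :=
    monotoneOn_of_deriv_nonneg (convex_Ioi 0) hF2.continuousOn
      (by simpa using hF2.differentiableOn two_ne_zero) (by simpa using hmono)
  obtain ⟨l, hl⟩ := hFmono.exists_tendsto_atTop ⟨1, by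
    rintro _ ⟨r, hr, rfl⟩
    exact (hbd r hr).2.le⟩
  have hl0 : 0 < l := (hbd 1 (mem_Ioi.2 one_pos)).1.trans_le <| ge_of_tendsto hl <|
    eventually_atTop.2 ⟨1, fun r hr => hFmono (mem_Ioi.2 one_pos) (one_pos.trans_le hr) hr⟩
  have hl1 : l ≤ 1 := le_of_tendsto hl <|
    eventually_atTop.2 ⟨1, fun r hr => (hbd r (one_pos.trans_le hr)).2.le⟩
  obtain rfl | hlt := hl1.eq_or_lt
  · exact hl
  have hneg : 1 / 2 * (l ^ 2 - 1) * l < 1 / 4 * (l ^ 2 - 1) * l := by nlinarith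
  have hdiff : DifferentiableOn ℝ (deriv F) (Ioi 0) :=
    (hF2.deriv_of_isOpen isOpen_Ioi (by norm_num)).differentiableOn one_ne_zero
  have hF'' : ∀ᶠ r in atTop, HasDerivAt (deriv F) (deriv (deriv F) r) r := by
    filter_upwards [eventually_gt_atTop 0] with r hr
    exact ((hdiff r hr).differentiableAt (isOpen_Ioi.mem_nhds hr)).hasDerivAt
  have hF'bot : Tendsto (deriv F) atTop atBot :=
    tendsto_atBot_of_hasDerivAt_le_neg (c := -(1 / 4 * (l ^ 2 - 1) * l)) (by linarith) hF''
      ((eventually_deriv_deriv_lt a g F halim hglim hode hmono hl hneg).mono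
        fun r h => by linarith)
  obtain ⟨r, hF'neg, hr⟩ :=
    ((hF'bot.eventually (eventually_lt_atBot 0)).and (eventually_gt_atTop 0)).exists
  exact absurd (hmono r hr) (not_le.2 hF'neg)

/-- If `a → 0` and `g → 0` at infinity and `f̃` is a C² solution on `(0,∞)` of
`f̃'' + (1/r) f̃' - (a²/r²) f̃ - (1/2)(f̃² + g² - 1) f̃ = 0` with `0 < f̃ < 1`
and `f̃' ≥ 0` on `(0,∞)`, then `f̃(r) → 1` as `r → ∞`. -/
theorem stmt12 (a g F : ℝ → ℝ)
    (ha : ContinuousOn a (Ici 0)) (hg : ContinuousOn g (Ici 0))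
    (halim : Tendsto a atTop (nhds 0)) (hglim : Tendsto g atTop (nhds 0))
    (hF2 : ContDiffOn ℝ 2 F (Ioi 0))
    (hode : ∀ r ∈ Ioi (0:ℝ),
      deriv (deriv F) r + (1 / r) * deriv F r - ((a r) ^ 2 / r ^ 2) * F r
        - (1 / 2) * ((F r) ^ 2 + (g r) ^ 2 - 1) * F r = 0)
    (hbd : ∀ r ∈ Ioi (0:ℝ), 0 < F r ∧ F r < 1)
    (hmono : ∀ r ∈ Ioi (0:ℝ), 0 ≤ deriv F r) :
    Tendsto F atTop (nhds 1) :=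
  stmt12_general a g F halim hglim hF2 hode hbd hmono
end

section
/- Let a, g : [0,∞) → ℝ be continuous with 0 < a(r) < 1 for r > 0, a(r) = O(r^{1/2} e^{-β(1-ε)r}) and g(r) = O(e^{-α(1-ε)r}) as r → ∞ for all ε ∈ (0,1). Suppose f : [0,∞) → ℝ is C² on (0,∞), 0 < f < 1, f solves f'' + (1/r) f' - (a²/r²) f - (1/2)(f² + g² - 1) f = 0 and f(r) → 1 as r → ∞. Then for every ε ∈ (0,1), 1 - f(r) = O(exp(-γ(1-ε) r)) as r → ∞, where γ = min{1, 2α, 2β}. -/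
open Filter Set Asymptotics Topology Real

/-!
Put `w = (1 - f) - η` with `η r = exp (-k (r - R))` and `k = γ (1 - ε)`. Beyond some `R`,
`w'' + w'/r ≥ k² w`: the nonlinearity contributes `(1 - f) ((1 + f) f / 2 - k²) ≥ 0` once
`f` is close to `1`, and the forcing `(a²/r² + g²/2) f` decays like `exp (-γ (1 - ε/2) r)`,
faster than the term `k η / r` produced by the comparison function. As `w R ≤ 0` and
`w → 0`, the maximum principle gives `w ≤ 0`, i.e. `1 - f r ≤ exp (k R) exp (-k r)`.
-/

theorem nonpos_of_le_deriv_deriv_add {w p : ℝ → ℝ} {q R : ℝ} (hq : 0 < q)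
    (hw : ContinuousOn w (Ici R))
    (hL : ∀ r ∈ Ioi R, q * w r ≤ deriv (deriv w) r + p r * deriv w r)
    (hR : w R ≤ 0) (hlim : Tendsto w atTop (𝓝 0)) :
    ∀ r ∈ Ici R, w r ≤ 0 := by
  by_contra! ⟨r₀, hr₀, hpos⟩
  have hfar : ∀ᶠ x in cocompact ℝ ⊓ 𝓟 (Ici R), w x ≤ w r₀ := by
    rw [cocompact_eq_atBot_atTop, inf_sup_right, eventually_sup]
    refine ⟨?_, (hlim.eventually (eventually_le_nhds hpos)).filter_mono inf_le_left⟩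
    rw [eventually_inf_principal]
    filter_upwards [eventually_lt_atBot R] with x hxR hx
    exact absurd hx (not_le.2 hxR)
  obtain ⟨x, hx, hmax⟩ := hw.exists_isMaxOn' isClosed_Ici hr₀ hfar
  have hwx : 0 < w x := hpos.trans_le (hmax hr₀)
  have hxR : R < x := lt_of_le_of_ne hx (by rintro rfl; linarith)
  have hnhds : Ici R ∈ 𝓝 x := Ici_mem_nhds hxR
  have hd : deriv w x = 0 := (hmax.isLocalMax hnhds).deriv_eq_zero
  have hdd : deriv (deriv w) x > 0 := by
    have := hL x hxR
    rw [hd, mul_zero, add_zero] at this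
    exact lt_of_lt_of_le (mul_pos hq hwx) this
  -- by the second derivative test `x` is also a local minimum, so `w` is constant near `x`
  have hmin := isLocalMin_of_deriv_deriv_pos hdd hd (hw.continuousAt hnhds)
  have hconst : w =ᶠ[𝓝 x] fun _ => w x := by
    filter_upwards [hmin, hmax.isLocalMax hnhds] with y hy₁ hy₂
    exact le_antisymm hy₂ hy₁
  have : deriv (deriv w) x = 0 := by
    rw [hconst.deriv.deriv_eq]
    simp
  linarith

theorem isLittleO_mul_exp_neg_mul {c k : ℝ} (h : k < c) :
    (fun r => r * exp (-c * r)) =o[atTop] fun r => exp (-k * r) := by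
  have := (isLittleO_pow_exp_pos_mul_atTop 1 (sub_pos.2 h)).mul_isBigO
    (isBigO_refl (fun r => exp (-c * r)) atTop)
  refine this.congr (fun r => by simp) (fun r => ?_)
  rw [← exp_add]; ring_nf

theorem isLittleO_exp_neg_mul {c k : ℝ} (h : k < c) :
    (fun r => exp (-c * r)) =o[atTop] fun r => exp (-k * r) := by
  refine isLittleO_exp_comp_exp_comp.2 ?_
  exact (tendsto_id.const_mul_atTop (sub_pos.2 h)).congr fun r => by simp; ring

theorem isLittleO_mul_sq_div_sq {a : ℝ → ℝ} {b k : ℝ}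
    (ha : a =O[atTop] fun r => √r * exp (-b * r)) (hk : k < 2 * b) :
    (fun r => r * (a r ^ 2 / r ^ 2)) =o[atTop] fun r => exp (-k * r) := by
  have hsq : (fun r => a r ^ 2 * r⁻¹) =O[atTop] fun r => (√r * exp (-b * r)) ^ 2 * r⁻¹ :=
    (ha.pow 2).mul (isBigO_refl _ _)
  refine (hsq.congr' ?_ ?_).trans_isLittleO (isLittleO_exp_neg_mul hk)
  · filter_upwards with r
    field_simp
  · filter_upwards [eventually_gt_atTop 0] with r hr
    rw [mul_pow, sq_sqrt hr.le, ← exp_nat_mul]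
    field_simp
    ring_nf

theorem isLittleO_mul_sq_div_two {g : ℝ → ℝ} {b k : ℝ}
    (hg : g =O[atTop] fun r => exp (-b * r)) (hk : k < 2 * b) :
    (fun r => r * (g r ^ 2 / 2)) =o[atTop] fun r => exp (-k * r) := by
  have hsq : (fun r => r * (g r ^ 2 / 2)) =O[atTop] fun r => r * exp (-b * r) ^ 2 :=
    (isBigO_refl _ _).mul ((hg.pow 2).const_mul_left (1 / 2) |>.congr_left fun r => by ring)
  refine hsq.trans_isLittleO ((isLittleO_mul_exp_neg_mul hk).congr_left fun r => ?_)
  rw [← exp_nat_mul]; ring_nf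

theorem profile_comparison_ineq {f f' f'' a g r k η : ℝ} (hr : 0 < r) (hf : f ≤ 1)
    (hode : f'' + 1 / r * f' - a ^ 2 / r ^ 2 * f - 1 / 2 * (f ^ 2 + g ^ 2 - 1) * f = 0)
    (hk : k ^ 2 ≤ (1 + f) * f / 2) (hforce : r * (a ^ 2 / r ^ 2 + g ^ 2 / 2) ≤ k * η) :
    k ^ 2 * (1 - f - η) ≤ (-f'' - k ^ 2 * η) + 1 / r * (-f' + k * η) := by
  have hnonlin : 0 ≤ (1 - f) * ((1 + f) * f / 2 - k ^ 2) :=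
    mul_nonneg (by linarith) (by linarith)
  have hforcing : (a ^ 2 / r ^ 2 + g ^ 2 / 2) * f ≤ k * η / r :=
    (mul_le_of_le_one_right (by positivity) hf).trans ((le_div_iff₀' hr).2 hforce)
  linear_combination hode + hnonlin + hforcing

theorem hasDerivAt_exp_neg_mul_sub (k R x : ℝ) :
    HasDerivAt (fun x => exp (-k * (x - R))) (-k * exp (-k * (x - R))) x := by
  simpa [mul_comm] using (((hasDerivAt_id x).sub_const R).const_mul (-k)).exp

theorem deriv_one_sub_sub_exp {f : ℝ → ℝ} {s : Set ℝ} (hs : IsOpen s)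
    (hf : ContDiffOn ℝ 2 f s) (k R : ℝ) {r : ℝ} (hr : r ∈ s) :
    deriv (fun x => 1 - f x - exp (-k * (x - R))) r = -deriv f r + k * exp (-k * (r - R)) ∧
    deriv (deriv fun x => 1 - f x - exp (-k * (x - R))) r =
      -deriv (deriv f) r - k ^ 2 * exp (-k * (r - R)) := by
  have hd : ∀ x ∈ s, HasDerivAt f (deriv f x) x := fun x hx =>
    ((hf.differentiableOn (by norm_num)).differentiableAt (hs.mem_nhds hx)).hasDerivAt
  have hdd : HasDerivAt (deriv f) (deriv (deriv f) r) r :=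
    (((hf.deriv_of_isOpen hs (m := 1) (by norm_num)).differentiableOn one_ne_zero)
      |>.differentiableAt (hs.mem_nhds hr)).hasDerivAt
  have hw : ∀ x ∈ s, HasDerivAt (fun x => 1 - f x - exp (-k * (x - R)))
      (-deriv f x + k * exp (-k * (x - R))) x := fun x hx =>
    (((hd x hx).const_sub 1).sub (hasDerivAt_exp_neg_mul_sub k R x)).congr_deriv (by ring)
  have hw' : deriv (fun x => 1 - f x - exp (-k * (x - R))) =ᶠ[𝓝 r]
      fun x => -deriv f x + k * exp (-k * (x - R)) := by
    filter_upwards [hs.mem_nhds hr] with x hx using (hw x hx).deriv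
  refine ⟨(hw r hr).deriv, hw'.deriv_eq.trans (HasDerivAt.deriv ?_)⟩
  exact (hdd.neg.add ((hasDerivAt_exp_neg_mul_sub k R r).const_mul k)).congr_deriv (by ring)

theorem one_sub_le_exp_of_ge {a g f : ℝ → ℝ} {k R : ℝ} (hk : 0 < k) (hR : 0 < R)
    (hf2 : ContDiffOn ℝ 2 f (Ioi 0)) (hfbd : ∀ r ≥ R, 0 ≤ f r ∧ f r ≤ 1)
    (hode : ∀ r > R,
      deriv (deriv f) r + (1 / r) * deriv f r - ((a r) ^ 2 / r ^ 2) * f r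
        - (1 / 2) * ((f r) ^ 2 + (g r) ^ 2 - 1) * f r = 0)
    (hflim : Tendsto f atTop (𝓝 1))
    (hnonlin : ∀ r ≥ R, k ^ 2 ≤ (1 + f r) * f r / 2)
    (hforce : ∀ r ≥ R, r * (a r ^ 2 / r ^ 2 + g r ^ 2 / 2) ≤ k * exp (-k * r)) :
    ∀ r ≥ R, 1 - f r ≤ exp (-k * (r - R)) := by
  set w := fun r => 1 - f r - exp (-k * (r - R))
  have hcont : ContinuousOn w (Ici R) :=
    ((continuousOn_const.sub hf2.continuousOn).sub (by fun_prop)).mono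
      fun r hr => hR.trans_le hr
  have hL : ∀ r ∈ Ioi R, k ^ 2 * w r ≤ deriv (deriv w) r + 1 / r * deriv w r := by
    intro r hr
    have hr0 : 0 < r := hR.trans hr
    obtain ⟨hd, hdd⟩ := deriv_one_sub_sub_exp isOpen_Ioi hf2 k R hr0
    rw [hd, hdd]
    refine profile_comparison_ineq hr0 (hfbd r hr.le).2 (hode r hr) (hnonlin r hr.le) ?_
    refine (hforce r hr.le).trans (mul_le_mul_of_nonneg_left (exp_le_exp.2 ?_) hk.le)
    nlinarith
  have hwR : w R ≤ 0 := by simp [w, (hfbd R le_rfl).1]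
  have hlim : Tendsto w atTop (𝓝 0) := by
    have hexp : Tendsto (fun r => exp (-k * (r - R))) atTop (𝓝 0) :=
      tendsto_exp_atBot.comp <| (tendsto_atTop_add_const_right _ (-R) tendsto_id)
        |>.const_mul_atTop_of_neg (neg_lt_zero.2 hk)
    simpa [w] using (tendsto_const_nhds (x := (1:ℝ)).sub hflim).sub hexp
  intro r hr
  have := nonpos_of_le_deriv_deriv_add (sq_pos_of_pos hk) hcont hL hwR hlim r hr
  simp only [w] at this
  linarith

theorem isBigO_one_sub_of_forcing_isLittleO {a g f : ℝ → ℝ} {k : ℝ}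
    (hk0 : 0 < k) (hk1 : k < 1) (hf2 : ContDiffOn ℝ 2 f (Ioi 0))
    (hfbd : ∀ r ∈ Ioi (0:ℝ), 0 < f r ∧ f r < 1)
    (hode : ∀ r ∈ Ioi (0:ℝ),
      deriv (deriv f) r + (1 / r) * deriv f r - ((a r) ^ 2 / r ^ 2) * f r
        - (1 / 2) * ((f r) ^ 2 + (g r) ^ 2 - 1) * f r = 0)
    (hflim : Tendsto f atTop (𝓝 1))
    (hforce : (fun r => r * (a r ^ 2 / r ^ 2 + g r ^ 2 / 2)) =o[atTop] fun r => exp (-k * r)) :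
    (fun r => 1 - f r) =O[atTop] fun r => exp (-k * r) := by
  have hnonlin : ∀ᶠ r in atTop, k ^ 2 < (1 + f r) * f r / 2 :=
    (((hflim.const_add 1).mul hflim).div_const 2).eventually
      (eventually_gt_nhds (by nlinarith))
  obtain ⟨R, hR⟩ :=
    (hnonlin.and ((hforce.bound hk0).and (eventually_gt_atTop 0))).exists_forall_of_atTop
  have hR0 : 0 < R := (hR R le_rfl).2.2
  have hle := one_sub_le_exp_of_ge hk0 hR0 hf2
    (fun r hr => ((hfbd r (hR0.trans_le hr)).imp le_of_lt le_of_lt))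
    (fun r hr => hode r (hR0.trans hr)) hflim (fun r hr => (hR r hr).1.le)
    (fun r hr => (le_abs_self _).trans (by simpa [abs_of_pos (exp_pos _)] using (hR r hr).2.1))
  refine IsBigO.of_bound (exp (k * R)) ?_
  filter_upwards [eventually_ge_atTop R] with r hr
  have hf := hfbd r (hR0.trans_le hr)
  rw [norm_of_nonneg (by linarith), norm_of_nonneg (exp_pos _).le, ← exp_add]
  exact (hle r hr).trans_eq (by ring_nf)

theorem stmt13_general (α β : ℝ) (hα : α > 0) (hβ : β > 0) (a g f : ℝ → ℝ)
    (hadec : ∀ ε ∈ Ioo (0:ℝ) 1,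
      a =O[atTop] fun r => Real.sqrt r * Real.exp (-β * (1 - ε) * r))
    (hgdec : ∀ ε ∈ Ioo (0:ℝ) 1,
      g =O[atTop] fun r => Real.exp (-α * (1 - ε) * r))
    (hf2 : ContDiffOn ℝ 2 f (Ioi 0))
    (hfbd : ∀ r ∈ Ioi (0:ℝ), 0 < f r ∧ f r < 1)
    (hode : ∀ r ∈ Ioi (0:ℝ),
      deriv (deriv f) r + (1 / r) * deriv f r - ((a r) ^ 2 / r ^ 2) * f r
        - (1 / 2) * ((f r) ^ 2 + (g r) ^ 2 - 1) * f r = 0)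
    (hflim : Tendsto f atTop (nhds 1)) :
    ∀ ε ∈ Ioo (0:ℝ) 1,
      (fun r => 1 - f r) =O[atTop]
        fun r => Real.exp (-(min 1 (min (2 * α) (2 * β))) * (1 - ε) * r) := by
  rintro ε ⟨hε0, hε1⟩
  set γ := min 1 (min (2 * α) (2 * β))
  have hγ0 : 0 < γ := lt_min one_pos (lt_min (by linarith) (by linarith))
  have hγ1 : γ ≤ 1 := min_le_left _ _
  have hγα : γ ≤ 2 * α := (min_le_right _ _).trans (min_le_left _ _)
  have hγβ : γ ≤ 2 * β := (min_le_right _ _).trans (min_le_right _ _)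
  have hε' : ε / 2 ∈ Ioo (0:ℝ) 1 := ⟨by linarith, by linarith⟩
  have ha : a =O[atTop] fun r => √r * exp (-(β * (1 - ε / 2)) * r) := by
    simpa only [neg_mul] using hadec _ hε'
  have hg : g =O[atTop] fun r => exp (-(α * (1 - ε / 2)) * r) := by
    simpa only [neg_mul] using hgdec _ hε'
  have hforce : (fun r => r * (a r ^ 2 / r ^ 2 + g r ^ 2 / 2)) =o[atTop]
      fun r => exp (-(γ * (1 - ε)) * r) := by
    simp only [mul_add]
    exact (isLittleO_mul_sq_div_sq ha (by nlinarith)).add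
      (isLittleO_mul_sq_div_two hg (by nlinarith))
  simpa only [neg_mul, mul_assoc] using
    isBigO_one_sub_of_forcing_isLittleO (mul_pos hγ0 (by linarith)) (by nlinarith) hf2 hfbd hode
      hflim hforce

/-- Decay of the Higgs profile at infinity: with `a = O(r^{1/2} e^{-β(1-ε)r})`
and `g = O(e^{-α(1-ε)r})` for all `ε ∈ (0,1)`, a C² solution `0 < f < 1` of
`f'' + (1/r) f' - (a²/r²) f - (1/2)(f² + g² - 1) f = 0` with `f → 1` satisfies
`1 - f(r) = O(exp(-γ(1-ε) r))` for every `ε ∈ (0,1)`, where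
`γ = min{1, 2α, 2β}`. -/
theorem stmt13 (α β : ℝ) (hα : α > 0) (hβ : β > 0) (a g f : ℝ → ℝ)
    (ha : ContinuousOn a (Ici 0)) (hg : ContinuousOn g (Ici 0))
    (habd : ∀ r > (0:ℝ), 0 < a r ∧ a r < 1)
    (hadec : ∀ ε ∈ Ioo (0:ℝ) 1,
      a =O[atTop] fun r => Real.sqrt r * Real.exp (-β * (1 - ε) * r))
    (hgdec : ∀ ε ∈ Ioo (0:ℝ) 1,
      g =O[atTop] fun r => Real.exp (-α * (1 - ε) * r))
    (hf2 : ContDiffOn ℝ 2 f (Ioi 0))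
    (hfbd : ∀ r ∈ Ioi (0:ℝ), 0 < f r ∧ f r < 1)
    (hode : ∀ r ∈ Ioi (0:ℝ),
      deriv (deriv f) r + (1 / r) * deriv f r - ((a r) ^ 2 / r ^ 2) * f r
        - (1 / 2) * ((f r) ^ 2 + (g r) ^ 2 - 1) * f r = 0)
    (hflim : Tendsto f atTop (nhds 1)) :
    ∀ ε ∈ Ioo (0:ℝ) 1,
      (fun r => 1 - f r) =O[atTop]
        fun r => Real.exp (-(min 1 (min (2 * α) (2 * β))) * (1 - ε) * r) :=
  stmt13_general α β hα hβ a g f hadec hgdec hf2 hfbd hode hflim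
end

section
/- Let f : [0,∞) → ℝ be continuous, increasing, with f(0)=0, f(∞)=1. Suppose ã solves ã'' - (1/r)ã' + β² f²(1-ã) = 0 on (0,∞) with ã(0)=0, and 0 < ã(r) < 1, ã'(r) ≥ 0 for all r > 0. Then ã'(r) > 0 for all r > 0 (ã is strictly increasing). -/
open Filter Set

/-!
If `ã'` vanished at some `r > 0`, then `r` would be a minimum of `ã' ≥ 0`, so `ã''(r) = 0` too and the
equation forces `f(r) = 0`; by monotonicity `f ≡ 0` on `[0, r]`. There the equation reads
`ã'' = ã'/x ≥ 0`, so `ã'` is nondecreasing on `(0, r]` and squeezed between `0` and `ã'(r) = 0`.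
Hence `ã` is constant on `[0, r]` and `ã(r) = ã(0) = 0`, contradicting `ã(r) > 0`.
-/

lemma eq_zero_of_nonneg_of_deriv_nonneg {g : ℝ → ℝ} {s r : ℝ} (hsr : s ≤ r)
    (hg : DifferentiableOn ℝ g (Icc s r)) (hg' : ∀ x ∈ Ioo s r, 0 ≤ deriv g x)
    (hs : 0 ≤ g s) (hr : g r = 0) : g s = 0 := by
  have hmono : MonotoneOn g (Icc s r) :=
    monotoneOn_of_deriv_nonneg (convex_Icc s r) hg.continuousOn
      (hg.mono interior_subset) (by rwa [interior_Icc])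
  exact le_antisymm (hr ▸ hmono (left_mem_Icc.2 hsr) (right_mem_Icc.2 hsr) hsr) hs

lemma MonotoneOn.eqOn_zero_of_eq_zero {f : ℝ → ℝ} {r : ℝ} (hf : MonotoneOn f (Ici 0))
    (hf0 : f 0 = 0) (hr : 0 ≤ r) (hfr : f r = 0) : ∀ x ∈ Icc 0 r, f x = 0 := fun _ hx =>
  le_antisymm (hfr ▸ hf hx.1 hr hx.2) (hf0 ▸ hf self_mem_Ici hx.1 hx.1)

theorem stmt15_general (β : ℝ) (hβ : β > 0) (f a : ℝ → ℝ)
    (hfmono : MonotoneOn f (Ici 0))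
    (hf0 : f 0 = 0)
    (haC : ContinuousOn a (Ici 0)) (ha2 : ContDiffOn ℝ 2 a (Ioi 0))
    (hode : ∀ r ∈ Ioi (0:ℝ),
      deriv (deriv a) r - (1 / r) * deriv a r + β ^ 2 * (f r) ^ 2 * (1 - a r) = 0)
    (ha0 : a 0 = 0)
    (hbd : ∀ r ∈ Ioi (0:ℝ), 0 < a r ∧ a r < 1)
    (hmono : ∀ r ∈ Ioi (0:ℝ), 0 ≤ deriv a r) :
    ∀ r ∈ Ioi (0:ℝ), 0 < deriv a r := by
  intro r (hr : 0 < r)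
  by_contra! hr0
  replace hr0 : deriv a r = 0 := le_antisymm hr0 (hmono r hr)
  have hdd : deriv (deriv a) r = 0 := IsLocalMin.deriv_eq_zero <| by
    filter_upwards [isOpen_Ioi.mem_nhds hr] with x hx
    exact hr0 ▸ hmono x hx
  have hfr : f r = 0 := by
    have h := hode r hr
    rw [hdd, hr0] at h
    have : 1 - a r ≠ 0 := by linarith [(hbd r hr).2]
    simpa [hβ.ne', this] using h
  have hf_zero := hfmono.eqOn_zero_of_eq_zero hf0 hr.le hfr
  have hda : DifferentiableOn ℝ (deriv a) (Ioi 0) :=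
    (ha2.deriv_of_isOpen isOpen_Ioi (m := 1) (by norm_num)).differentiableOn one_ne_zero
  have hdda : ∀ x ∈ Ioo 0 r, 0 ≤ deriv (deriv a) x := fun x hx => by
    have h := hode x hx.1
    rw [hf_zero x (Ioo_subset_Icc_self hx)] at h
    have : 0 ≤ 1 / x * deriv a x := mul_nonneg (one_div_pos.2 hx.1).le (hmono x hx.1)
    linarith
  have hda_zero : ∀ x ∈ Ioo 0 r, deriv a x = 0 := fun x hx =>
    eq_zero_of_nonneg_of_deriv_nonneg hx.2.le (hda.mono fun y hy => hx.1.trans_le hy.1)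
      (fun y hy => hdda y ⟨hx.1.trans hy.1, hy.2⟩) (hmono x hx.1) hr0
  obtain ⟨c, hc, hslope⟩ := exists_deriv_eq_slope a hr (haC.mono Icc_subset_Ici_self)
    ((ha2.differentiableOn (by norm_num)).mono Ioo_subset_Ioi_self)
  rw [hda_zero c hc, ha0, eq_comm, div_eq_zero_iff] at hslope
  exact (hbd r hr).1.ne' (by simpa [hr.ne'] using hslope)

/-- Strict monotonicity of the gauge profile: if `f` is continuous, increasing,
`f(0) = 0`, `f(∞) = 1`, and `ã` solves `ã'' - (1/r) ã' + β² f² (1 - ã) = 0` on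
`(0,∞)` with `ã(0) = 0`, `0 < ã < 1` and `ã' ≥ 0`, then `ã' > 0` on `(0,∞)`. -/
theorem stmt15 (β : ℝ) (hβ : β > 0) (f a : ℝ → ℝ)
    (hf : ContinuousOn f (Ici 0)) (hfmono : MonotoneOn f (Ici 0))
    (hf0 : f 0 = 0) (hflim : Tendsto f atTop (nhds 1))
    (haC : ContinuousOn a (Ici 0)) (ha2 : ContDiffOn ℝ 2 a (Ioi 0))
    (hode : ∀ r ∈ Ioi (0:ℝ),
      deriv (deriv a) r - (1 / r) * deriv a r + β ^ 2 * (f r) ^ 2 * (1 - a r) = 0)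
    (ha0 : a 0 = 0)
    (hbd : ∀ r ∈ Ioi (0:ℝ), 0 < a r ∧ a r < 1)
    (hmono : ∀ r ∈ Ioi (0:ℝ), 0 ≤ deriv a r) :
    ∀ r ∈ Ioi (0:ℝ), 0 < deriv a r :=
  stmt15_general β hβ f a hfmono hf0 haC ha2 hode ha0 hbd hmono
end

section
/- Let (f_n) be a sequence of continuous functions on [0,∞) with 0 ≤ f_n ≤ 1, |f_n(r)| ≤ M r for r ≤ 1 (uniformly in n), f_n → f uniformly on every compact subinterval of (0,∞), and suppose there is a function η with η(r) → 0 as r → ∞ such that |f_n(r) - 1| ≤ η(r) for all n and all large r. Then ‖f_n - f‖_X → 0, where ‖h‖_X = sup_{r>0} |r^{-k}(1+r^k) h(r)| and k ∈ (0,1). -/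
open Filter Set

/-- The weighted sup norm `‖h‖_X = sup_{r>0} |r^{-k}(1+r^k) h(r)|`. -/
noncomputable def wnormX (k : ℝ) (h : ℝ → ℝ) : ℝ :=
  ⨆ r : Ioi (0:ℝ), |(r:ℝ) ^ (-k) * (1 + (r:ℝ) ^ k) * h r|

/-- Locally uniform convergence on `(0,∞)` plus a uniform bound `|f_n(r)| ≤ M r`
near `0` and uniform decay `|f_n(r) - 1| ≤ η(r) → 0` at infinity upgrade to
convergence in the weighted norm. -/
theorem stmt17 (k M : ℝ) (hk : k ∈ Ioo (0:ℝ) 1) (hM : M > 0)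
    (fn : ℕ → ℝ → ℝ) (f η : ℝ → ℝ)
    (hcont : ∀ n, ContinuousOn (fn n) (Ici 0))
    (hbd01 : ∀ n, ∀ r ∈ Ici (0:ℝ), 0 ≤ fn n r ∧ fn n r ≤ 1)
    (hbdM : ∀ n, ∀ r ∈ Icc (0:ℝ) 1, |fn n r| ≤ M * r)
    (hconv : ∀ K : Set ℝ, K ⊆ Ioi 0 → IsCompact K → TendstoUniformlyOn fn f atTop K)
    (hη : Tendsto η atTop (nhds 0))
    (hdec : ∃ R : ℝ, ∀ n, ∀ r ≥ R, |fn n r - 1| ≤ η r) :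
    Tendsto (fun n => wnormX k (fun r => fn n r - f r)) atTop (nhds 0) := by
  obtain ⟨hk0, hk1⟩ := hk
  obtain ⟨R, hR⟩ := hdec
  haveI : Nonempty (Ioi (0:ℝ)) := ⟨⟨1, Set.mem_Ioi.mpr one_pos⟩⟩
  have hpt : ∀ r : ℝ, 0 < r → Tendsto (fun n => fn n r) atTop (nhds (f r)) := by
    intro r hr
    exact (hconv {r} (by simpa using hr) isCompact_singleton).tendsto_at rfl
  have hfM : ∀ r ∈ Ioc (0:ℝ) 1, |f r| ≤ M * r := by
    intro r hr
    refine le_of_tendsto ((hpt r hr.1).abs) ?_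
    exact Eventually.of_forall fun n => hbdM n r ⟨hr.1.le, hr.2⟩
  have hfη : ∀ r, R ≤ r → 0 < r → |f r - 1| ≤ η r := by
    intro r hrR hr
    refine le_of_tendsto (((hpt r hr).sub tendsto_const_nhds).abs) ?_
    exact Eventually.of_forall fun n => hR n r hrR
  rw [NormedAddCommGroup.tendsto_nhds_zero]
  intro ε hε
  set δ : ℝ := min ((ε/(8*M)) ^ (1/(1-k))) 1 with hδdef
  have h1k : (0:ℝ) < 1 - k := by linarith
  have hδ1 : δ ≤ 1 := min_le_right _ _
  have hδ0 : 0 < δ := by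
    apply lt_min _ one_pos
    apply Real.rpow_pos_of_pos
    positivity
  have hδpow : 4 * M * δ ^ (1-k) ≤ ε / 2 := by
    have h1 : δ ^ (1-k) ≤ ((ε/(8*M)) ^ (1/(1-k))) ^ (1-k) :=
      Real.rpow_le_rpow hδ0.le (min_le_left _ _) h1k.le
    have h2 : ((ε/(8*M)) ^ (1/(1-k))) ^ (1-k) = ε/(8*M) := by
      rw [← Real.rpow_mul (by positivity), one_div_mul_cancel h1k.ne', Real.rpow_one]
    rw [h2] at h1
    have h3 : 4 * M * δ ^ (1-k) ≤ 4 * M * (ε/(8*M)) := by nlinarith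
    have h4 : 4 * M * (ε/(8*M)) = ε/2 := by field_simp; ring
    linarith
  have hη' := Metric.tendsto_nhds.mp hη (ε/8) (by positivity)
  rw [eventually_atTop] at hη'
  obtain ⟨R2, hR2⟩ := hη'
  set R' : ℝ := max (max R R2) 1 with hR'def
  have hR'1 : (1:ℝ) ≤ R' := le_max_right _ _
  have hRR' : R ≤ R' := le_trans (le_max_left _ _) (le_max_left _ _)
  have hR2R' : R2 ≤ R' := le_trans (le_max_right _ _) (le_max_left _ _)
  have hηsmall : ∀ r, R' ≤ r → η r ≤ ε/8 := by
    intro r hr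
    have h := hR2 r (le_trans hR2R' hr)
    rw [Real.dist_eq, sub_zero] at h
    exact (le_abs_self _).trans h.le
  set C : ℝ := δ ^ (-k) * (1 + R' ^ k) with hCdef
  have hC0 : 0 < C := by
    have := Real.rpow_pos_of_pos hδ0 (-k)
    have h2 : (0:ℝ) < R' ^ k := Real.rpow_pos_of_pos (by linarith) k
    nlinarith
  have hKconv := hconv (Icc δ R') (fun r hr => lt_of_lt_of_le hδ0 hr.1) isCompact_Icc
  filter_upwards [Metric.tendstoUniformlyOn_iff.mp hKconv (ε/(2*C)) (by positivity)] with n hn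
  rw [Real.norm_eq_abs]
  have key : ∀ r : Ioi (0:ℝ), |(r:ℝ)^(-k) * (1 + (r:ℝ)^k) * (fn n r - f r)| ≤ ε/2 := by
    rintro ⟨r, hr⟩
    rw [Set.mem_Ioi] at hr
    simp only
    have hw0 : 0 < r ^ (-k) * (1 + r ^ k) := by
      have := Real.rpow_pos_of_pos hr (-k)
      have h2 : (0:ℝ) < r ^ k := Real.rpow_pos_of_pos hr k
      nlinarith
    rw [abs_mul, abs_of_pos hw0]
    rcases le_or_gt r δ with hrδ | hrδ
    · -- near zero
      have hr1 : r ≤ 1 := hrδ.trans hδ1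
      have hd : |fn n r - f r| ≤ 2 * M * r := by
        calc |fn n r - f r| ≤ |fn n r| + |f r| := abs_sub _ _
          _ ≤ M * r + M * r := add_le_add (hbdM n r ⟨hr.le, hr1⟩) (hfM r ⟨hr, hr1⟩)
          _ = 2 * M * r := by ring
      have hwk : r ^ k ≤ 1 := Real.rpow_le_one hr.le hr1 hk0.le
      have hrk0 : 0 < r ^ (-k) := Real.rpow_pos_of_pos hr (-k)
      calc r ^ (-k) * (1 + r ^ k) * |fn n r - f r|
          ≤ (r ^ (-k) * 2) * (2 * M * r) := by
            apply mul_le_mul _ hd (abs_nonneg _) (by positivity)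
            nlinarith
        _ = 4 * M * (r ^ (-k) * r ^ (1:ℝ)) := by rw [Real.rpow_one]; ring
        _ = 4 * M * r ^ (1 - k) := by
            rw [← Real.rpow_add hr]; ring_nf
        _ ≤ 4 * M * δ ^ (1 - k) := by
            have := Real.rpow_le_rpow hr.le hrδ h1k.le
            nlinarith
        _ ≤ ε / 2 := hδpow
    rcases le_or_gt r R' with hrR' | hrR'
    · -- middle
      have hd := hn r ⟨hrδ.le, hrR'⟩
      rw [Real.dist_eq, abs_sub_comm] at hd
      have hw : r ^ (-k) * (1 + r ^ k) ≤ C := by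
        have h1 : r ^ (-k) ≤ δ ^ (-k) := by
          rw [Real.rpow_neg hr.le, Real.rpow_neg hδ0.le]
          exact inv_anti₀ (Real.rpow_pos_of_pos hδ0 k)
            (Real.rpow_le_rpow hδ0.le hrδ.le hk0.le)
        have h2 : r ^ k ≤ R' ^ k := Real.rpow_le_rpow hr.le hrR' hk0.le
        have h3 : 0 < r ^ (-k) := Real.rpow_pos_of_pos hr (-k)
        have h4 : 0 < r ^ k := Real.rpow_pos_of_pos hr k
        nlinarith
      calc r ^ (-k) * (1 + r ^ k) * |fn n r - f r|
          ≤ C * (ε / (2 * C)) := mul_le_mul hw hd.le (abs_nonneg _) hC0.le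
        _ = ε / 2 := by field_simp
    · -- far out
      have hd : |fn n r - f r| ≤ ε/4 := by
        have h1 : |fn n r - 1| ≤ η r := hR n r (hRR'.trans hrR'.le)
        have h2 : |f r - 1| ≤ η r := hfη r (hRR'.trans hrR'.le) hr
        have h3 : η r ≤ ε/8 := hηsmall r hrR'.le
        calc |fn n r - f r| = |(fn n r - 1) - (f r - 1)| := by congr 1; ring
          _ ≤ |fn n r - 1| + |f r - 1| := abs_sub _ _
          _ ≤ ε/4 := by linarith
      have hr1 : 1 ≤ r := hR'1.trans hrR'.le
      have hw : r ^ (-k) * (1 + r ^ k) ≤ 2 := by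
        have h1 : r ^ (-k) * r ^ k = 1 := by
          rw [← Real.rpow_add hr]; simp
        have h2 : r ^ (-k) ≤ 1 :=
          Real.rpow_le_one_of_one_le_of_nonpos hr1 (by linarith)
        nlinarith [Real.rpow_pos_of_pos hr k]
      calc r ^ (-k) * (1 + r ^ k) * |fn n r - f r|
          ≤ 2 * (ε/4) := mul_le_mul hw hd (abs_nonneg _) (by norm_num)
        _ = ε / 2 := by ring
  have hsup_le : wnormX k (fun r => fn n r - f r) ≤ ε/2 := ciSup_le key
  have hsup_ge : 0 ≤ wnormX k (fun r => fn n r - f r) := by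
    have hbdd : BddAbove (range fun r : Ioi (0:ℝ) =>
        |(r:ℝ)^(-k) * (1 + (r:ℝ)^k) * (fn n r - f r)|) := by
      refine ⟨ε/2, ?_⟩
      rintro x ⟨r, rfl⟩
      exact key r
    exact le_trans (abs_nonneg _) (le_ciSup hbdd ⟨1, Set.mem_Ioi.mpr one_pos⟩)
  rw [abs_of_nonneg hsup_ge]
  linarith
end

section
/- Let β > 0 and B > 0, and consider the rescaled equation â''(t) - (1/t) â'(t) = (β²/B) f̂(t)² (â(t) - 1) on [0,1] with â(t) ~ t² as t → 0, where 0 ≤ f̂ ≤ 1. In the limit B → ∞ the equation becomes â'' - (1/t) â' = 0 with â(t) ~ t², whose unique solution is â(t) = t². Consequently, for B sufficiently large, the solution ã(B, ·) of ã'' - (1/r)ã' + β² f²(1-ã) = 0, ã(r) ~ B r², reaches the value 1 at some finite r with positive derivative. -/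
/-!
Written as `(a'/r)' = -β² f² (1 - a) / r`, the equation shows that, since `f r ≤ M₁ r`, the
quantity `a'/r` drops by at most `β² M₁² / 2` on `(0, 1]` while `0 ≤ a ≤ 1`. Near `0` we have
`a ~ B r²`, and Cauchy's mean value theorem yields `ξ < 1/2` with `0 < a ξ < 1` and
`a'(ξ)/ξ > B`. For large `B` this keeps `a' > 4 r` after `ξ` as long as `a ≤ 1`; then `a`
grows by more than `1` on `[ξ, 1]`, so it must reach `1` before `r = 1`, with positive slope.
-/

open Filter Set Topology

theorem ContinuousOn.exists_first_eq_of_lt_of_le {g : ℝ → ℝ} {x t c : ℝ}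
    (hg : ContinuousOn g (Icc x t)) (hx : g x < c) (ht : ∃ s ∈ Icc x t, c ≤ g s) :
    ∃ r ∈ Ioc x t, g r = c ∧ ∀ s ∈ Ico x r, g s < c := by
  set S := Icc x t ∩ g ⁻¹' Ici c
  have hS : IsClosed S := hg.preimage_isClosed_of_isClosed isClosed_Icc isClosed_Ici
  have hSbdd : BddBelow S := ⟨x, fun s hs => hs.1.1⟩
  obtain ⟨r, ⟨⟨hxr, hrt⟩, hcr⟩, hmin⟩ : ∃ r, IsLeast S r := ⟨_, hS.isLeast_csInf ht hSbdd⟩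
  have hbelow : ∀ s ∈ Ico x r, g s < c := fun s hs =>
    not_le.1 fun hcs => hs.2.not_ge (hmin ⟨⟨hs.1, hs.2.le.trans hrt⟩, hcs⟩)
  obtain ⟨s, hs, hgs⟩ := intermediate_value_Icc hxr (hg.mono (Icc_subset_Icc_right hrt))
    ⟨hx.le, hcr⟩
  have hsr : s = r := le_antisymm hs.2 (hmin ⟨⟨hs.1, hs.2.trans hrt⟩, hgs.ge⟩)
  refine ⟨r, ⟨lt_of_le_of_ne hxr ?_, hrt⟩, hsr ▸ hgs, hbelow⟩
  rintro rfl
  exact hcr.not_gt hx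

theorem half_mul_sq_sub_sq_le_image_sub_of_mul_le_deriv {F F' : ℝ → ℝ} {x y k : ℝ}
    (hxy : x ≤ y) (hF : ContinuousOn F (Icc x y))
    (hF' : ∀ s ∈ Ioo x y, HasDerivAt F (F' s) s) (hk : ∀ s ∈ Ioo x y, k * s ≤ F' s) :
    k / 2 * (y ^ 2 - x ^ 2) ≤ F y - F x := by
  have hmono : MonotoneOn (fun s => F s - k / 2 * s ^ 2) (Icc x y) := by
    refine monotoneOn_of_hasDerivWithinAt_nonneg (f' := fun s => F' s - k * s) (convex_Icc x y)
      (hF.sub (by fun_prop)) (fun s hs => ?_) (fun s hs => ?_) <;> rw [interior_Icc] at hs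
    · rw [interior_Icc]
      have := (hF' s hs).sub ((hasDerivAt_pow 2 s).const_mul (k / 2))
      exact this.hasDerivWithinAt.congr_deriv (by ring)
    · linarith [hk s hs]
  have := hmono (left_mem_Icc.2 hxy) (right_mem_Icc.2 hxy) hxy
  simp only at this
  linarith

theorem hasDerivAt_deriv_div_self_of_eq {a : ℝ → ℝ} {s q : ℝ} (hs : s ≠ 0)
    (ha : DifferentiableAt ℝ (deriv a) s)
    (hode : deriv (deriv a) s - 1 / s * deriv a s + q = 0) :
    HasDerivAt (fun x => deriv a x / x) (-q / s) s := by
  refine (ha.hasDerivAt.div (hasDerivAt_id s) hs).congr_deriv ?_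
  rw [show deriv (deriv a) s = 1 / s * deriv a s - q by linarith, id]
  field_simp
  ring

theorem exists_deriv_div_self_eq_two_mul_div_sq {a : ℝ → ℝ} {r : ℝ} (hr : 0 < r)
    (ha0 : a 0 = 0) (hcont : ContinuousOn a (Icc 0 r))
    (hdiff : ∀ s ∈ Ioo 0 r, DifferentiableAt ℝ a s) :
    ∃ ξ ∈ Ioo 0 r, deriv a ξ / ξ = 2 * (a r / r ^ 2) := by
  obtain ⟨ξ, hξ, heq⟩ := exists_ratio_hasDerivAt_eq_ratio_slope a (deriv a) hr hcont
    (fun s hs => (hdiff s hs).hasDerivAt) (· ^ 2) (fun s => 2 * s) (by fun_prop)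
    (fun s _ => by simpa using hasDerivAt_pow 2 s)
  refine ⟨ξ, hξ, ?_⟩
  have hξ0 := hξ.1.ne'
  rw [ha0] at heq
  field_simp
  linear_combination heq

theorem exists_deriv_div_self_gt_of_tendsto {a : ℝ → ℝ} {B b ε : ℝ} (hb : 0 < b) (hbB : b < B)
    (hε : 0 < ε) (hcont : ContinuousOn a (Ici 0)) (hdiff : ∀ s ∈ Ioi 0, DifferentiableAt ℝ a s)
    (ha0 : a 0 = 0) (hlim : Tendsto (fun r => a r / r ^ 2) (𝓝[>] 0) (𝓝 B)) :
    ∃ ξ ∈ Ioo 0 ε, 0 < a ξ ∧ a ξ < 1 ∧ 2 * b < deriv a ξ / ξ := by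
  have hsmall : ∀ᶠ s in 𝓝[>] 0, a s < 1 := by
    have := ((hcont 0 self_mem_Ici).mono Ioi_subset_Ici_self).tendsto
    rw [ha0] at this
    exact this.eventually (gt_mem_nhds one_pos)
  obtain ⟨u, hu, hgood⟩ := mem_nhdsGT_iff_exists_Ioo_subset.1
    ((hlim.eventually (lt_mem_nhds hbB)).and (hsmall.and (Ioo_mem_nhdsGT hε)))
  obtain ⟨ξ, hξ, hGξ⟩ := exists_deriv_div_self_eq_two_mul_div_sq (half_pos hu) ha0
    (hcont.mono Icc_subset_Ici_self) (fun s hs => hdiff s hs.1)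
  have hξu : ξ ∈ Ioo 0 u := ⟨hξ.1, hξ.2.trans (half_lt_self hu)⟩
  obtain ⟨hbξ, haξ, hξε⟩ := hgood hξu
  have hbr := (hgood ⟨half_pos hu, half_lt_self hu⟩).1
  exact ⟨ξ, hξε, (div_pos_iff_of_pos_right (pow_pos hξ.1 2)).1 (hb.trans hbξ), haξ,
    by rw [hGξ]; linarith⟩

theorem ContDiffOn.differentiableAt_and_differentiableAt_deriv {a : ℝ → ℝ} {U : Set ℝ}
    {s : ℝ} (ha : ContDiffOn ℝ 2 a U) (hU : IsOpen U) (hs : s ∈ U) :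
    DifferentiableAt ℝ a s ∧ DifferentiableAt ℝ (deriv a) s :=
  ⟨(ha.contDiffAt (hU.mem_nhds hs)).differentiableAt (by norm_num),
    ((ha.deriv_of_isOpen hU (m := 1) (by norm_num)).contDiffAt
      (hU.mem_nhds hs)).differentiableAt one_ne_zero⟩

section RadialEquation

variable {a f : ℝ → ℝ} {β M₁ : ℝ}

theorem deriv_div_self_sub_le_of_mem_Icc (hC2 : ContDiffOn ℝ 2 a (Ioi 0))
    (hode : ∀ r ∈ Ioi (0:ℝ),
      deriv (deriv a) r - 1 / r * deriv a r + β ^ 2 * f r ^ 2 * (1 - a r) = 0)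
    (hf : ∀ r ∈ Ioc (0:ℝ) 1, 0 ≤ f r ∧ f r ≤ M₁ * r) {ξ t : ℝ} (hξ : 0 < ξ) (hξt : ξ ≤ t)
    (ht : t ≤ 1) (ha : ∀ s ∈ Ioo ξ t, 0 ≤ a s ∧ a s ≤ 1) :
    deriv a ξ / ξ - β ^ 2 * M₁ ^ 2 / 2 ≤ deriv a t / t := by
  have hG : ∀ s ∈ Icc ξ t,
      HasDerivAt (fun x => deriv a x / x) (-(β ^ 2 * f s ^ 2 * (1 - a s)) / s) s :=
    fun s hs => have hs0 := hξ.trans_le hs.1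
      hasDerivAt_deriv_div_self_of_eq hs0.ne'
        (hC2.differentiableAt_and_differentiableAt_deriv isOpen_Ioi hs0).2 (hode s hs0)
  have hdrop := half_mul_sq_sub_sq_le_image_sub_of_mul_le_deriv (k := -(β ^ 2 * M₁ ^ 2)) hξt
    (fun s hs => (hG s hs).continuousAt.continuousWithinAt)
    (fun s hs => hG s (Ioo_subset_Icc_self hs)) fun s hs => by
      have hs0 := hξ.trans hs.1
      obtain ⟨hf0, hfM⟩ := hf s ⟨hs0, hs.2.le.trans ht⟩
      obtain ⟨ha0, ha1⟩ := ha s hs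
      have hf2 : f s ^ 2 * (1 - a s) ≤ (M₁ * s) ^ 2 := calc
        f s ^ 2 * (1 - a s) ≤ f s ^ 2 := by nlinarith [sq_nonneg (f s)]
        _ ≤ (M₁ * s) ^ 2 := pow_le_pow_left₀ hf0 hfM 2
      rw [le_div_iff₀ hs0]
      nlinarith [mul_le_mul_of_nonneg_left hf2 (sq_nonneg β)]
  have hsq : t ^ 2 - ξ ^ 2 ≤ 1 := by nlinarith
  nlinarith [mul_le_mul_of_nonneg_left hsq (by positivity : (0:ℝ) ≤ β ^ 2 * M₁ ^ 2)]

/-- Positivity of `a` is preserved because `a' > 0` as long as `0 ≤ a ≤ 1`. -/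
theorem deriv_div_self_sub_le_of_le_one (hC2 : ContDiffOn ℝ 2 a (Ioi 0))
    (hode : ∀ r ∈ Ioi (0:ℝ),
      deriv (deriv a) r - 1 / r * deriv a r + β ^ 2 * f r ^ 2 * (1 - a r) = 0)
    (hf : ∀ r ∈ Ioc (0:ℝ) 1, 0 ≤ f r ∧ f r ≤ M₁ * r) {ξ t : ℝ} (hξ : 0 < ξ) (hξt : ξ ≤ t)
    (ht : t ≤ 1) (haξ : 0 < a ξ) (hGξ : β ^ 2 * M₁ ^ 2 / 2 < deriv a ξ / ξ)
    (ha : ∀ s ∈ Icc ξ t, a s ≤ 1) :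
    deriv a ξ / ξ - β ^ 2 * M₁ ^ 2 / 2 ≤ deriv a t / t := by
  have hcont : ContinuousOn a (Icc ξ t) := hC2.continuousOn.mono fun s hs => hξ.trans_le hs.1
  have hpos : ∀ s ∈ Icc ξ t, 0 < a s := by
    by_contra! hneg
    obtain ⟨s, hs, has⟩ := hneg
    obtain ⟨z, hz, haz, hbefore⟩ := hcont.neg.exists_first_eq_of_lt_of_le (c := 0)
      (neg_neg_of_pos haξ) ⟨s, hs, neg_nonneg.2 has⟩
    have hmono : MonotoneOn a (Icc ξ z) := by
      refine monotoneOn_of_deriv_nonneg (convex_Icc ξ z)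
        (hcont.mono (Icc_subset_Icc_right hz.2)) (fun u hu => ?_) fun u hu => ?_ <;>
        rw [interior_Icc] at hu
      · exact (hC2.differentiableAt_and_differentiableAt_deriv isOpen_Ioi
          (hξ.trans hu.1)).1.differentiableWithinAt
      · have hu0 := hξ.trans hu.1
        have hGu := deriv_div_self_sub_le_of_mem_Icc hC2 hode hf hξ hu.1.le
          (hu.2.le.trans (hz.2.trans ht)) fun v hv =>
            ⟨(neg_lt_zero.1 (hbefore v ⟨hv.1.le, hv.2.trans hu.2⟩)).le,
              ha v ⟨hv.1.le, hv.2.le.trans (hu.2.le.trans hz.2)⟩⟩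
        exact (div_pos_iff_of_pos_right hu0).1 (by linarith) |>.le
    have := hmono (left_mem_Icc.2 hz.1.le) (right_mem_Icc.2 hz.1.le) hz.1.le
    rw [Pi.neg_apply, neg_eq_zero] at haz
    linarith
  exact deriv_div_self_sub_le_of_mem_Icc hC2 hode hf hξ hξt ht fun s hs =>
    ⟨(hpos s (Ioo_subset_Icc_self hs)).le, ha s (Ioo_subset_Icc_self hs)⟩

end RadialEquation

theorem stmt18_general (β M₁ : ℝ) (f : ℝ → ℝ)
    (hf01 : ∀ r ∈ Ici (0:ℝ), 0 ≤ f r ∧ f r ≤ 1)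
    (hfbd : ∀ r ∈ Icc (0:ℝ) 1, f r ≤ M₁ * r) :
    ∃ B₀ > (0:ℝ), ∀ B ≥ B₀, ∀ a : ℝ → ℝ,
      ContinuousOn a (Ici 0) → ContDiffOn ℝ 2 a (Ioi 0) → a 0 = 0 →
      (∀ r ∈ Ioi (0:ℝ),
        deriv (deriv a) r - (1 / r) * deriv a r + β ^ 2 * (f r) ^ 2 * (1 - a r) = 0) →
      Tendsto (fun r => a r / r ^ 2) (nhdsWithin 0 (Ioi 0)) (nhds B) →
      ∃ r₀ > (0:ℝ), a r₀ = 1 ∧ 0 < deriv a r₀ := by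
  refine ⟨β ^ 2 * M₁ ^ 2 / 2 + 4, by positivity, fun B hB a hcont hC2 ha0 hode hlim => ?_⟩
  have hB4 : 4 ≤ B := by nlinarith [mul_nonneg (sq_nonneg β) (sq_nonneg M₁)]
  have hfM : ∀ r ∈ Ioc (0:ℝ) 1, 0 ≤ f r ∧ f r ≤ M₁ * r := fun r hr =>
    ⟨(hf01 r hr.1.le).1, hfbd r (Ioc_subset_Icc_self hr)⟩
  have hda : ∀ s ∈ Ioi (0:ℝ), DifferentiableAt ℝ a s := fun s hs =>
    (hC2.differentiableAt_and_differentiableAt_deriv isOpen_Ioi hs).1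
  obtain ⟨ξ, ⟨hξ0, hξ⟩, haξ0, haξ1, hGξ⟩ := exists_deriv_div_self_gt_of_tendsto (b := B / 2)
    (ε := 1 / 2) (by positivity) (by linarith) (by norm_num) hcont hda ha0 hlim
  have hcont' : ContinuousOn a (Icc ξ 1) := hC2.continuousOn.mono fun s hs => hξ0.trans_le hs.1
  have hslope : ∀ t ∈ Icc ξ 1, (∀ s ∈ Icc ξ t, a s ≤ 1) → 4 * t < deriv a t := fun t ht hat => by
    have := deriv_div_self_sub_le_of_le_one hC2 hode hfM hξ0 ht.1 ht.2 haξ0 (by linarith) hat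
    exact (lt_div_iff₀ (hξ0.trans_le ht.1)).1 (by linarith)
  by_cases hreach : ∃ s ∈ Icc ξ 1, 1 ≤ a s
  · obtain ⟨r₀, hr₀, har₀, hbelow⟩ := hcont'.exists_first_eq_of_lt_of_le haξ1 hreach
    have hr₀pos : 0 < r₀ := hξ0.trans hr₀.1
    refine ⟨r₀, hr₀pos, har₀, ?_⟩
    have := hslope r₀ (Ioc_subset_Icc_self hr₀) fun s hs =>
      hs.2.eq_or_lt.elim (fun h => h ▸ har₀.le) fun h => (hbelow s ⟨hs.1, h⟩).le
    linarith
  · push Not at hreach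
    have hrise := half_mul_sq_sub_sq_le_image_sub_of_mul_le_deriv (k := 4) (by linarith) hcont'
      (fun s hs => (hda s (hξ0.trans hs.1)).hasDerivAt)
      fun s hs => (hslope s (Ioo_subset_Icc_self hs) fun u hu =>
        (hreach u ⟨hu.1, hu.2.trans hs.2.le⟩).le).le
    nlinarith [hreach 1 ⟨by linarith, le_rfl⟩]

/-- For `B` sufficiently large, the solution `ã(B,·)` of
`ã'' - (1/r) ã' + β² f² (1-ã) = 0` with `ã(r) ~ B r²` near `0` reaches the
value `1` at some finite `r` with positive derivative (the shooting set `B⁺`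
is nonempty). -/
theorem stmt18 (β M₁ : ℝ) (hβ : β > 0) (hM₁ : M₁ > 0) (f : ℝ → ℝ)
    (hf : ContinuousOn f (Ici 0)) (hfmono : MonotoneOn f (Ici 0))
    (hf01 : ∀ r ∈ Ici (0:ℝ), 0 ≤ f r ∧ f r ≤ 1)
    (hfbd : ∀ r ∈ Icc (0:ℝ) 1, f r ≤ M₁ * r) :
    ∃ B₀ > (0:ℝ), ∀ B ≥ B₀, ∀ a : ℝ → ℝ,
      ContinuousOn a (Ici 0) → ContDiffOn ℝ 2 a (Ioi 0) → a 0 = 0 →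
      (∀ r ∈ Ioi (0:ℝ),
        deriv (deriv a) r - (1 / r) * deriv a r + β ^ 2 * (f r) ^ 2 * (1 - a r) = 0) →
      Tendsto (fun r => a r / r ^ 2) (nhdsWithin 0 (Ioi 0)) (nhds B) →
      ∃ r₀ > (0:ℝ), a r₀ = 1 ∧ 0 < deriv a r₀ :=
  stmt18_general β M₁ f hf01 hfbd
end

section
/- Let α ∈ (0, 1/√2) and let f : [0,∞) → ℝ be continuous with f(∞) = 1. Suppose g is a C² solution on (0,∞) of g'' + (1/r) g' = [α² + (1/2)(f² + g² - 1)] g with g(r) > 0 and g'(r) < 0 for all r > 0, and g bounded. Then g(r) → 0 as r → ∞. -/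
/-!
Since `g' < 0`, `g` decreases, so it suffices to find, for each `ε > 0`, a point where
`g < ε`. If instead `g ≥ ε` everywhere, then for large `r` we have `f² > 1 - ε²/2`, and the
equation together with `g' < 0` gives `g'' ≥ (α² + ε²/4) ε > 0`. Then `g'` grows at least
linearly and eventually becomes positive, contradicting `g' < 0`.
-/

open Filter Set

lemma tendsto_nhds_zero_of_antitoneOn_Ioi {g : ℝ → ℝ} {a : ℝ} (hanti : AntitoneOn g (Ioi a))
    (hpos : ∀ r ∈ Ioi a, 0 < g r) (hsmall : ∀ ε > 0, ∃ r ∈ Ioi a, g r < ε) :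
    Tendsto g atTop (nhds 0) := by
  refine tendsto_order.2 ⟨fun ε hε => ?_, fun ε hε => ?_⟩
  · filter_upwards [eventually_gt_atTop a] with r hr
    exact hε.trans (hpos r hr)
  · obtain ⟨r₀, hr₀, hgr₀⟩ := hsmall ε hε
    filter_upwards [eventually_ge_atTop r₀] with r hr
    exact (hanti hr₀ (lt_of_lt_of_le hr₀ hr) hr).trans_lt hgr₀

lemma tendsto_atTop_of_le_deriv {u : ℝ → ℝ} {R c : ℝ} (hc : 0 < c)
    (hu : DifferentiableOn ℝ u (Ici R)) (hderiv : ∀ x ∈ Ioi R, c ≤ deriv u x) :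
    Tendsto u atTop atTop := by
  have hlin : ∀ x ∈ Ici R, u R + c * (x - R) ≤ u x := by
    intro x hx
    have := (convex_Ici R).mul_sub_le_image_sub_of_le_deriv hu.continuousOn
      (by rw [interior_Ici]; exact hu.mono Ioi_subset_Ici_self)
      (by rw [interior_Ici]; exact hderiv) R self_mem_Ici x hx hx
    linarith
  refine tendsto_atTop_mono' _ ?_ (tendsto_atTop_add_const_left _ (u R)
    ((tendsto_atTop_add_const_right _ (-R) tendsto_id).const_mul_atTop hc))
  filter_upwards [eventually_ge_atTop R] with x hx
  simpa [sub_eq_add_neg] using hlin x hx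

lemma le_deriv_deriv_of_ode {α ε r : ℝ} {f g : ℝ → ℝ} (hε : 0 < ε) (hr : 0 < r)
    (hode : deriv (deriv g) r + (1 / r) * deriv g r =
      (α ^ 2 + (1 / 2) * ((f r) ^ 2 + (g r) ^ 2 - 1)) * g r)
    (hneg : deriv g r < 0) (hf : 1 - ε ^ 2 / 2 < f r ^ 2) (hg : ε ≤ g r) :
    (α ^ 2 + ε ^ 2 / 4) * ε ≤ deriv (deriv g) r := by
  have hcoeff : α ^ 2 + ε ^ 2 / 4 ≤ α ^ 2 + (1 / 2) * (f r ^ 2 + g r ^ 2 - 1) := by nlinarith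
  have hrhs : (α ^ 2 + ε ^ 2 / 4) * ε ≤ (α ^ 2 + (1 / 2) * (f r ^ 2 + g r ^ 2 - 1)) * g r :=
    mul_le_mul hcoeff hg hε.le ((by positivity : (0:ℝ) ≤ α ^ 2 + ε ^ 2 / 4).trans hcoeff)
  have hdamping : (1 / r) * deriv g r < 0 := mul_neg_of_pos_of_neg (one_div_pos.2 hr) hneg
  linarith

theorem stmt19_general (α : ℝ) (f g : ℝ → ℝ)
    (hflim : Tendsto f atTop (nhds 1))
    (hg2 : ContDiffOn ℝ 2 g (Ioi 0))
    (hode : ∀ r ∈ Ioi (0:ℝ),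
      deriv (deriv g) r + (1 / r) * deriv g r =
        (α ^ 2 + (1 / 2) * ((f r) ^ 2 + (g r) ^ 2 - 1)) * g r)
    (hpos : ∀ r ∈ Ioi (0:ℝ), 0 < g r)
    (hneg : ∀ r ∈ Ioi (0:ℝ), deriv g r < 0) :
    Tendsto g atTop (nhds 0) := by
  have hanti : StrictAntiOn g (Ioi 0) :=
    strictAntiOn_of_deriv_neg (convex_Ioi 0)
      (hg2.differentiableOn (by norm_num)).continuousOn (by rwa [interior_Ioi])
  refine tendsto_nhds_zero_of_antitoneOn_Ioi hanti.antitoneOn hpos fun ε hε => ?_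
  by_contra! hge
  have hf2 : ∀ᶠ r in atTop, 1 - ε ^ 2 / 2 < f r ^ 2 :=
    (hflim.pow 2).eventually (eventually_gt_nhds (by rw [one_pow]; nlinarith))
  obtain ⟨R, hR⟩ := (hf2.and (eventually_gt_atTop 0)).exists_forall_of_atTop
  have hdg : DifferentiableOn ℝ (deriv g) (Ici R) :=
    ((hg2.deriv_of_isOpen isOpen_Ioi (by norm_num)).differentiableOn one_ne_zero).mono
      fun x hx => (hR R le_rfl).2.trans_le hx
  have hg'' : ∀ x ∈ Ioi R, (α ^ 2 + ε ^ 2 / 4) * ε ≤ deriv (deriv g) x := fun x hx =>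
    have hx0 : 0 < x := (hR x hx.le).2
    le_deriv_deriv_of_ode hε hx0 (hode x hx0) (hneg x hx0) (hR x hx.le).1 (hge x hx0)
  have hg'_unbounded := tendsto_atTop_of_le_deriv (by positivity) hdg hg''
  obtain ⟨r, hr, hRr⟩ :=
    ((hg'_unbounded.eventually_gt_atTop 0).and (eventually_ge_atTop R)).exists
  exact (hneg r ((hR R le_rfl).2.trans_le hRr)).not_gt hr

/-- If `α ∈ (0, 1/√2)`, `f → 1` at infinity, and `g` is a bounded C² solution on
`(0,∞)` of `g'' + (1/r) g' = [α² + (1/2)(f² + g² - 1)] g` with `g > 0` and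
`g' < 0` everywhere, then `g → 0` at infinity. -/
theorem stmt19 (α : ℝ) (hα : α ∈ Ioo (0:ℝ) (1 / Real.sqrt 2)) (f g : ℝ → ℝ)
    (hf : ContinuousOn f (Ici 0)) (hflim : Tendsto f atTop (nhds 1))
    (hg2 : ContDiffOn ℝ 2 g (Ioi 0))
    (hode : ∀ r ∈ Ioi (0:ℝ),
      deriv (deriv g) r + (1 / r) * deriv g r =
        (α ^ 2 + (1 / 2) * ((f r) ^ 2 + (g r) ^ 2 - 1)) * g r)
    (hpos : ∀ r ∈ Ioi (0:ℝ), 0 < g r)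
    (hneg : ∀ r ∈ Ioi (0:ℝ), deriv g r < 0)
    (hbd : ∃ C : ℝ, ∀ r ∈ Ioi (0:ℝ), g r ≤ C) :
    Tendsto g atTop (nhds 0) :=
  stmt19_general α f g hflim hg2 hode hpos hneg
end
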